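/- arXiv:nlin/0112045 — 5 statements merged into one kernel-verified Lean document; each statement's English description precedes it below -/
import Mathlib

section
/- Plücker-type determinant identity: Let X be an n×(n+1) complex matrix (or ℤ×ℤ matrix restricted appropriately) and let Λ be the shift matrix with entries Λ_{i,j} = δ_{i+1,j}. For V_a = I − aΛ, define det_n(Y) as the determinant of the top-left n×n submatrix of Y. Then for any a, b, c ∈ ℂ: (a−b)·det_n(V_a V_b X)·det_{n+1}(V_c X) + (b−c)·det_n(V_b V_c X)·det_{n+1}(V_a X) + (c−a)·det_n(V_c V_a X)·det_{n+1}(V_b X) = 0. -/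
open scoped BigOperators

noncomputable section

/-- `(q;q)_n = ∏_{j=1}^n (1 - q^j)` -/
def qPoch (q : ℂ) (n : ℕ) : ℂ := ∏ j ∈ Finset.range n, (1 - q ^ (j + 1))

/-- The q-analogue `h_k(t)` of the complete homogeneous symmetric functions,
with `h_k = 0` for `k < 0`. -/
def hco (M : ℕ) (q : ℂ) (k : ℤ) (t : Fin M → ℂ) : ℂ :=
  if 0 ≤ k then
    ∑ ν ∈ Finset.Nat.antidiagonalTuple M k.toNat, ∏ i, t i ^ ν i / qPoch q (ν i)
  else 0

/-- The q-shift operator `T_i`, replacing `t_i` by `q t_i`. -/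
def qshift (M : ℕ) (q : ℂ) (i : Fin M) (t : Fin M → ℂ) : Fin M → ℂ :=
  Function.update t i (q * t i)

/-- The (generalized) q-Schur function `S_μ(t) = det[h_{μ_a-a+b}(t)]` for an
integer sequence `μ`. -/
def Sgen (M : ℕ) (q : ℂ) {l : ℕ} (μ : Fin l → ℤ) (t : Fin M → ℂ) : ℂ :=
  Matrix.det (Matrix.of fun a b : Fin l => hco M q (μ a - (a : ℤ) + (b : ℤ)) t)


/-- Row action of V_a = 1 - a Λ on a matrix with rows and columns indexed by ℕ. -/
def Vrow (a : ℂ) (X : ℕ → ℕ → ℂ) : ℕ → ℕ → ℂ := fun i j => X i j - a * X (i + 1) j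

/-- The principal n × n minor (rows and columns 1,…,n). -/
def detn (n : ℕ) (X : ℕ → ℕ → ℂ) : ℂ :=
  Matrix.det (Matrix.of fun r c : Fin n => X (r : ℕ) (c : ℕ))

open Matrix


lemma detIdCols (n : ℕ) (C : Matrix (Fin (n+2)) (Fin (n+2)) ℂ)
    (h : ∀ (i j : Fin (n+2)), (j : ℕ) < n → C i j = if (i : ℕ) = (j : ℕ) then 1 else 0) :
    C.det = C ⟨n, by omega⟩ ⟨n, by omega⟩ * C ⟨n+1, by omega⟩ ⟨n+1, by omega⟩
      - C ⟨n, by omega⟩ ⟨n+1, by omega⟩ * C ⟨n+1, by omega⟩ ⟨n, by omega⟩ := by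
  have hval : ∀ j : Fin n, ((finSumFinEquiv (Sum.inl j) : Fin (n+2)) : ℕ) = (j : ℕ) := by
    intro j; simp
  have hvalr : ∀ j : Fin 2, ((finSumFinEquiv (Sum.inr j) : Fin (n+2)) : ℕ) = n + (j : ℕ) := by
    intro j; simp
  have hsub : C.submatrix finSumFinEquiv finSumFinEquiv = Matrix.fromBlocks 1
      (Matrix.of fun (i : Fin n) (j : Fin 2) => C (finSumFinEquiv (Sum.inl i)) (finSumFinEquiv (Sum.inr j)))
      0
      (Matrix.of fun i j : Fin 2 => C (finSumFinEquiv (Sum.inr i)) (finSumFinEquiv (Sum.inr j))) := by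
    ext i j
    cases i with
    | inl i =>
      cases j with
      | inl j =>
        simp only [submatrix_apply, fromBlocks_apply₁₁]
        rw [h _ _ (by rw [hval]; exact j.isLt)]
        simp [Matrix.one_apply, Fin.ext_iff]
        split_ifs <;> simp_all
      | inr j => simp
    | inr i =>
      cases j with
      | inl j =>
        simp only [submatrix_apply, fromBlocks_apply₂₁]
        rw [h _ _ (by rw [hval]; exact j.isLt)]
        have := hvalr i
        have := hval j
        simp only [Matrix.zero_apply]
        rw [if_neg (by omega)]
      | inr j => simp
  have hd := Matrix.det_submatrix_equiv_self finSumFinEquiv C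
  rw [← hd, hsub, Matrix.det_fromBlocks_zero₂₁, Matrix.det_one, one_mul,
    Matrix.det_fin_two]
  have h0 : (finSumFinEquiv (Sum.inr (0 : Fin 2)) : Fin (n+2)) = ⟨n, by omega⟩ := by
    apply Fin.ext; rw [hvalr]; simp
  have h1 : (finSumFinEquiv (Sum.inr (1 : Fin 2)) : Fin (n+2)) = ⟨n+1, by omega⟩ := by
    apply Fin.ext; rw [hvalr]; simp
  simp only [Matrix.of_apply, h0, h1]


def Lmat (n : ℕ) (X : ℕ → ℕ → ℂ) (u v : Fin (n+2) → ℂ) : Matrix (Fin (n+2)) (Fin (n+2)) ℂ :=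
  Matrix.of fun i j => if (j : ℕ) < n then X i j else if (j : ℕ) = n then u i else v i

def Lfun (n : ℕ) (X : ℕ → ℕ → ℂ) (u v : Fin (n+2) → ℂ) : ℂ := (Lmat n X u v).det

lemma Lfun_swap (n : ℕ) (X : ℕ → ℕ → ℂ) (u v : Fin (n+2) → ℂ) :
    Lfun n X u v = - Lfun n X v u := by
  classical
  set jn : Fin (n+2) := ⟨n, by omega⟩ with hjn
  set jm : Fin (n+2) := ⟨n+1, by omega⟩ with hjm
  have hne : jn ≠ jm := by simp [jn, jm, Fin.ext_iff]
  have hmat : Lmat n X u v = (Lmat n X v u).submatrix id (Equiv.swap jn jm) := by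
    ext i j
    by_cases hj : (j : ℕ) < n
    · have hj1 : j ≠ jn := by simp [jn, Fin.ext_iff]; omega
      have hj2 : j ≠ jm := by simp [jm, Fin.ext_iff]; omega
      simp [Lmat, submatrix_apply, Equiv.swap_apply_of_ne_of_ne hj1 hj2, hj]
    · by_cases hj' : (j : ℕ) = n
      · have : j = jn := by apply Fin.ext; simpa [jn]
        subst this
        simp [Lmat, submatrix_apply, Equiv.swap_apply_left, jn, jm]
      · have : j = jm := by apply Fin.ext; simp [jm]; omega
        subst this
        simp [Lmat, submatrix_apply, Equiv.swap_apply_right, jn, jm]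
  rw [Lfun, hmat, Matrix.det_permute' (Equiv.swap jn jm), Equiv.Perm.sign_swap hne]
  simp [Lfun]

lemma Lfun_decomp (n : ℕ) (X : ℕ → ℕ → ℂ) (p q : Fin (n+2) → ℂ)
    (hpq : Lfun n X p q ≠ 0) (u v : Fin (n+2) → ℂ) :
    Lfun n X u v = (Lmat n X p q).det *
      (((Lmat n X p q)⁻¹ *ᵥ u) ⟨n, by omega⟩ * ((Lmat n X p q)⁻¹ *ᵥ v) ⟨n+1, by omega⟩
        - ((Lmat n X p q)⁻¹ *ᵥ v) ⟨n, by omega⟩ * ((Lmat n X p q)⁻¹ *ᵥ u) ⟨n+1, by omega⟩) := by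
  classical
  set M := Lmat n X p q with hM
  have hdet : IsUnit M.det := isUnit_iff_ne_zero.mpr hpq
  set C := M⁻¹ * Lmat n X u v with hC
  have hA : Lmat n X u v = M * C := by
    rw [hC, Matrix.mul_nonsing_inv_cancel_left _ _ hdet]
  have hid : ∀ (i j : Fin (n+2)), (j : ℕ) < n → C i j = if (i : ℕ) = (j : ℕ) then 1 else 0 := by
    intro i j hj
    have hcol : ∀ k, Lmat n X u v k j = M k j := by
      intro k; simp [Lmat, hM, hj]
    have : C i j = (M⁻¹ * M) i j := by
      rw [hC]
      simp only [Matrix.mul_apply]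
      exact Finset.sum_congr rfl fun k _ => by rw [hcol]
    rw [this, Matrix.nonsing_inv_mul _ hdet, Matrix.one_apply]
    simp [Fin.ext_iff]
  have hcu : ∀ i, C i ⟨n, by omega⟩ = (M⁻¹ *ᵥ u) i := by
    intro i
    simp only [hC, Matrix.mul_apply, Matrix.mulVec, dotProduct, Lmat, Matrix.of_apply]
    exact Finset.sum_congr rfl fun k _ => by norm_num
  have hcv : ∀ i, C i ⟨n+1, by omega⟩ = (M⁻¹ *ᵥ v) i := by
    intro i
    simp only [hC, Matrix.mul_apply, Matrix.mulVec, dotProduct, Lmat, Matrix.of_apply]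
    exact Finset.sum_congr rfl fun k _ => by norm_num
  have := detIdCols n C hid
  rw [Lfun, hA, Matrix.det_mul, this, hcu, hcv, hcu, hcv]

lemma plucker (n : ℕ) (X : ℕ → ℕ → ℂ) (u v r s : Fin (n+2) → ℂ) :
    Lfun n X u v * Lfun n X r s - Lfun n X u r * Lfun n X v s
      + Lfun n X u s * Lfun n X v r = 0 := by
  classical
  by_cases hall : ∀ p q : Fin (n+2) → ℂ, Lfun n X p q = 0
  · rw [hall u v, hall u r, hall u s]; ring
  · push_neg at hall
    obtain ⟨p, q, hpq⟩ := hall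
    have hd := Lfun_decomp n X p q hpq
    rw [hd u v, hd r s, hd u r, hd v s, hd u s, hd v r]
    ring

def Vtri (m : ℕ) (a : ℂ) : Matrix (Fin (m+1)) (Fin (m+1)) ℂ :=
  Matrix.of fun i j => if i = j then 1 else if (j : ℕ) = (i : ℕ) + 1 then -a else 0

lemma Vtri_det (m : ℕ) (a : ℂ) : (Vtri m a).det = 1 := by
  rw [Matrix.det_of_upperTriangular]
  · simp [Vtri]
  · intro i j hij
    simp only [Vtri, Matrix.of_apply, id] at *
    rw [if_neg (by exact fun h => absurd h.symm (Fin.ne_of_lt hij)), if_neg (by omega)]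

lemma Vtri_mul (m : ℕ) (a : ℂ) (B : Matrix (Fin (m+1)) (Fin (m+1)) ℂ) (k j : Fin (m+1)) :
    (Vtri m a * B) k j
      = B k j - a * (if h : (k : ℕ) + 1 < m + 1 then B ⟨(k : ℕ)+1, h⟩ j else 0) := by
  classical
  rw [Matrix.mul_apply]
  by_cases hk : (k : ℕ) + 1 < m + 1
  · have hpt : ∀ i : Fin (m+1), Vtri m a k i * B i j
        = (if i = k then B i j else 0)
          + (if i = (⟨(k : ℕ)+1, hk⟩ : Fin (m+1)) then -a * B i j else 0) := by
      intro i
      by_cases h1 : i = k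
      · subst h1
        rw [if_pos rfl, if_neg (show ¬(i = (⟨(i:ℕ)+1, hk⟩ : Fin (m+1))) by simp [Fin.ext_iff])]
        simp [Vtri]
      · by_cases h2 : i = (⟨(k : ℕ)+1, hk⟩ : Fin (m+1))
        · subst h2
          rw [if_neg h1, if_pos rfl]
          simp only [Vtri, Matrix.of_apply]
          rw [if_neg (fun h => h1 h.symm), if_pos (by simp)]
          ring
        · rw [if_neg h1, if_neg h2]
          simp only [Vtri, Matrix.of_apply]
          rw [if_neg (fun h => h1 h.symm), if_neg (by simp [Fin.ext_iff] at h2 ⊢; omega)]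
          ring
    rw [Finset.sum_congr rfl fun i _ => hpt i, Finset.sum_add_distrib,
      Finset.sum_ite_eq' Finset.univ k, Finset.sum_ite_eq' Finset.univ]
    simp only [Finset.mem_univ, if_pos, dif_pos hk]
    ring
  · have hpt : ∀ i : Fin (m+1), Vtri m a k i * B i j = (if i = k then B i j else 0) := by
      intro i
      by_cases h1 : i = k
      · subst h1; simp [Vtri]
      · rw [if_neg h1]
        simp only [Vtri, Matrix.of_apply]
        rw [if_neg (fun h => h1 h.symm), if_neg (by omega)]
        ring
    rw [Finset.sum_congr rfl fun i _ => hpt i, Finset.sum_ite_eq' Finset.univ k]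
    simp only [Finset.mem_univ, if_pos, dif_neg hk]
    ring

lemma borderA (m : ℕ) (a : ℂ) (X : ℕ → ℕ → ℂ) :
    (Matrix.of fun k j : Fin (m+1) =>
        if (j : ℕ) < m then X k j else a ^ (m - (k : ℕ))).det = detn m (Vrow a X) := by
  classical
  set B : Matrix (Fin (m+1)) (Fin (m+1)) ℂ := Matrix.of fun k j =>
    if (j : ℕ) < m then X k j else a ^ (m - (k : ℕ)) with hB
  set B' : Matrix (Fin (m+1)) (Fin (m+1)) ℂ := Matrix.of fun k j =>
    if (j : ℕ) < m then (if (k : ℕ) < m then Vrow a X k j else X (k : ℕ) j)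
    else (if (k : ℕ) = m then 1 else 0) with hB'
  have hmul : Vtri m a * B = B' := by
    ext k j
    rw [Vtri_mul]
    by_cases hk : (k : ℕ) + 1 < m + 1
    · rw [dif_pos hk]
      by_cases hj : (j : ℕ) < m
      · simp only [hB, hB', Matrix.of_apply, if_pos hj, if_pos (show (k:ℕ) < m by omega)]
        rfl
      · simp only [hB, hB', Matrix.of_apply, if_neg hj]
        rw [if_neg (by omega)]
        have hexp : m - (k : ℕ) = (m - ((k : ℕ) + 1)) + 1 := by omega
        rw [hexp, pow_succ]
        ring
    · have hkm : (k : ℕ) = m := by omega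
      rw [dif_neg hk]
      by_cases hj : (j : ℕ) < m
      · simp only [hB, hB', Matrix.of_apply, if_pos hj]
        rw [if_neg (by omega)]
        ring
      · simp only [hB, hB', Matrix.of_apply, if_neg hj]
        rw [if_pos hkm, hkm]
        simp
  have hdet : B.det = B'.det := by
    rw [← hmul, Matrix.det_mul, Vtri_det, one_mul]
  rw [hdet]
  have hsub : B'.submatrix finSumFinEquiv finSumFinEquiv
      = Matrix.fromBlocks (Matrix.of fun r c : Fin m => Vrow a X (r : ℕ) (c : ℕ)) 0
          (Matrix.of fun (_ : Fin 1) (c : Fin m) => X m (c : ℕ)) 1 := by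
    ext i j
    cases i with
    | inl i =>
      cases j with
      | inl j =>
        simp [hB', Fin.is_lt]
      | inr j =>
        simp only [Matrix.submatrix_apply, Matrix.fromBlocks_apply₁₂, hB', Matrix.of_apply]
        rw [if_neg (by simp), if_neg (by simp only [finSumFinEquiv_apply_right, finSumFinEquiv_apply_left, Fin.coe_natAdd, Fin.coe_castAdd]; omega)]
        simp
    | inr i =>
      cases j with
      | inl j =>
        simp only [Matrix.submatrix_apply, Matrix.fromBlocks_apply₂₁, hB', Matrix.of_apply]
        rw [if_pos (by simp), if_neg (by simp only [finSumFinEquiv_apply_right, finSumFinEquiv_apply_left, Fin.coe_natAdd, Fin.coe_castAdd]; omega)]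
        simp
      | inr j =>
        simp only [Matrix.submatrix_apply, Matrix.fromBlocks_apply₂₂, hB', Matrix.of_apply]
        rw [if_neg (by simp), if_pos (by simp)]
        have hij : i = j := Subsingleton.elim _ _
        subst hij
        simp [Matrix.one_apply]
  have hd2 := Matrix.det_submatrix_equiv_self finSumFinEquiv B'
  rw [← hd2, hsub, Matrix.det_fromBlocks_zero₁₂, detn]
  simp

lemma borderB (m : ℕ) (a b : ℂ) (X : ℕ → ℕ → ℂ) :
    (Matrix.of fun k j : Fin (m+2) =>
        if (j : ℕ) < m then X k j
        else if (j : ℕ) = m then a ^ (m + 1 - (k : ℕ)) else b ^ (m + 1 - (k : ℕ))).det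
      = (a - b) * detn m (Vrow b (Vrow a X)) := by
  classical
  set B : Matrix (Fin (m+2)) (Fin (m+2)) ℂ := Matrix.of fun k j =>
    if (j : ℕ) < m then X k j
    else if (j : ℕ) = m then a ^ (m + 1 - (k : ℕ)) else b ^ (m + 1 - (k : ℕ)) with hB
  set B₂ : Matrix (Fin (m+2)) (Fin (m+2)) ℂ := Matrix.of fun k j =>
    if (j : ℕ) < m then (if (k : ℕ) < m + 1 then Vrow a X k j else X (k : ℕ) j)
    else if (j : ℕ) = m then (if (k : ℕ) = m + 1 then 1 else 0)
    else (if (k : ℕ) < m + 1 then (b - a) * b ^ (m - (k : ℕ)) else 1) with hB₂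
  have hmul : Vtri (m+1) a * B = B₂ := by
    ext k j
    rw [Vtri_mul]
    by_cases hk : (k : ℕ) + 1 < m + 2
    · rw [dif_pos hk]
      by_cases hj : (j : ℕ) < m
      · simp only [hB, hB₂, Matrix.of_apply, if_pos hj, if_pos (show (k:ℕ) < m + 1 by omega)]
        rfl
      · by_cases hj' : (j : ℕ) = m
        · simp only [hB, hB₂, Matrix.of_apply, if_neg hj, if_pos hj']
          rw [if_neg (by omega)]
          have hexp : m + 1 - (k : ℕ) = (m + 1 - ((k : ℕ) + 1)) + 1 := by omega
          rw [hexp, pow_succ]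
          ring
        · simp only [hB, hB₂, Matrix.of_apply, if_neg hj, if_neg hj']
          rw [if_pos (show (k:ℕ) < m + 1 by omega)]
          have hexp : m + 1 - (k : ℕ) = (m - (k : ℕ)) + 1 := by omega
          have hexp2 : m + 1 - ((k : ℕ) + 1) = m - (k : ℕ) := by omega
          rw [hexp, hexp2, pow_succ]
          ring
    · have hkm : (k : ℕ) = m + 1 := by omega
      rw [dif_neg hk]
      by_cases hj : (j : ℕ) < m
      · simp only [hB, hB₂, Matrix.of_apply, if_pos hj]
        rw [if_neg (by omega)]
        ring
      · by_cases hj' : (j : ℕ) = m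
        · simp only [hB, hB₂, Matrix.of_apply, if_neg hj, if_pos hj', if_pos hkm, hkm]
          simp
        · simp only [hB, hB₂, Matrix.of_apply, if_neg hj, if_neg hj']
          rw [if_neg (by omega), hkm]
          simp
  have hdetB : B.det = B₂.det := by
    rw [← hmul, Matrix.det_mul, Vtri_det, one_mul]
  -- swap the last two columns
  set jn : Fin (m+2) := ⟨m, by omega⟩ with hjn
  set jm1 : Fin (m+2) := ⟨m+1, by omega⟩ with hjm1
  have hne : jn ≠ jm1 := by simp [jn, jm1, Fin.ext_iff]
  set B₃ : Matrix (Fin (m+2)) (Fin (m+2)) ℂ := Matrix.of fun k j =>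
    if (j : ℕ) < m then (if (k : ℕ) < m + 1 then Vrow a X k j else X (k : ℕ) j)
    else if (j : ℕ) = m then (if (k : ℕ) < m + 1 then (b - a) * b ^ (m - (k : ℕ)) else 1)
    else (if (k : ℕ) = m + 1 then 1 else 0) with hB₃
  have hswap : B₂ = B₃.submatrix id (Equiv.swap jn jm1) := by
    ext k j
    by_cases hj : (j : ℕ) < m
    · have hj1 : j ≠ jn := by simp [jn, Fin.ext_iff]; omega
      have hj2 : j ≠ jm1 := by simp [jm1, Fin.ext_iff]; omega
      simp only [Matrix.submatrix_apply, id, Equiv.swap_apply_of_ne_of_ne hj1 hj2]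
      simp [hB₂, hB₃, hj]
    · by_cases hj' : (j : ℕ) = m
      · have : j = jn := by apply Fin.ext; simpa [jn]
        subst this
        simp only [Matrix.submatrix_apply, id, Equiv.swap_apply_left]
        simp only [hB₂, hB₃, Matrix.of_apply, jn, jm1]
        norm_num
      · have : j = jm1 := by apply Fin.ext; simp [jm1]; omega
        subst this
        simp only [Matrix.submatrix_apply, id, Equiv.swap_apply_right]
        simp only [hB₂, hB₃, Matrix.of_apply, jn, jm1]
        norm_num
  have hdet3 : B₂.det = - B₃.det := by
    rw [hswap, Matrix.det_permute' (Equiv.swap jn jm1), Equiv.Perm.sign_swap hne]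
    simp
  -- block structure of B₃
  set A : Matrix (Fin (m+1)) (Fin (m+1)) ℂ := Matrix.of fun k j =>
    if (j : ℕ) < m then Vrow a X (k : ℕ) (j : ℕ) else (b - a) * b ^ (m - (k : ℕ)) with hA
  have hsub : B₃.submatrix (finSumFinEquiv : Fin (m+1) ⊕ Fin 1 ≃ Fin (m+2)) (finSumFinEquiv : Fin (m+1) ⊕ Fin 1 ≃ Fin (m+2))
      = Matrix.fromBlocks A 0
          (Matrix.of fun (_ : Fin 1) (c : Fin (m+1)) =>
            if (c : ℕ) < m then X (m+1) (c : ℕ) else 1) 1 := by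
    ext i j
    cases i with
    | inl i =>
      cases j with
      | inl j =>
        simp only [Matrix.submatrix_apply, Matrix.fromBlocks_apply₁₁, hB₃, hA, Matrix.of_apply,
          finSumFinEquiv_apply_left, Fin.coe_castAdd]
        by_cases hj : (j : ℕ) < m
        · rw [if_pos hj, if_pos hj, if_pos (by omega)]
        · have : (j : ℕ) = m := by omega
          rw [if_neg hj, if_neg hj, if_pos this, if_pos (by omega)]
      | inr j =>
        simp only [Matrix.submatrix_apply, Matrix.fromBlocks_apply₁₂, hB₃, Matrix.of_apply,
          finSumFinEquiv_apply_left, finSumFinEquiv_apply_right, Fin.coe_castAdd, Fin.coe_natAdd]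
        rw [if_neg (by omega), if_neg (by omega), if_neg (by omega)]
        simp
    | inr i =>
      cases j with
      | inl j =>
        simp only [Matrix.submatrix_apply, Matrix.fromBlocks_apply₂₁, hB₃, Matrix.of_apply,
          finSumFinEquiv_apply_left, finSumFinEquiv_apply_right, Fin.coe_castAdd, Fin.coe_natAdd]
        simp only [Fin.val_eq_zero, add_zero]
        by_cases hj : (j : ℕ) < m
        · rw [if_pos hj, if_neg (by omega), if_pos hj]
        · have hjm : (j : ℕ) = m := by omega
          rw [if_neg hj, if_pos hjm, if_neg (by omega), if_neg hj]
      | inr j =>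
        simp only [Matrix.submatrix_apply, Matrix.fromBlocks_apply₂₂, hB₃, Matrix.of_apply,
          finSumFinEquiv_apply_right, Fin.coe_natAdd, Fin.val_eq_zero, add_zero]
        have hij : i = j := Subsingleton.elim _ _
        subst hij
        rw [if_neg (by omega), if_neg (by omega)]
        simp [Matrix.one_apply]
  have hd2 := Matrix.det_submatrix_equiv_self (finSumFinEquiv : Fin (m+1) ⊕ Fin 1 ≃ Fin (m+2)) B₃
  have hdetA : B₃.det = A.det := by
    rw [← hd2, hsub, Matrix.det_fromBlocks_zero₁₂, Matrix.det_one, mul_one]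
  set A' : Matrix (Fin (m+1)) (Fin (m+1)) ℂ := Matrix.of fun k j =>
    if (j : ℕ) < m then Vrow a X (k : ℕ) (j : ℕ) else b ^ (m - (k : ℕ)) with hA'
  have hAup : A = A'.updateCol ⟨m, by omega⟩
      ((b - a) • fun k : Fin (m+1) => b ^ (m - (k : ℕ))) := by
    ext k j
    rw [Matrix.updateCol_apply]
    by_cases hj : j = (⟨m, by omega⟩ : Fin (m+1))
    · rw [if_pos hj, hA]
      subst hj
      simp only [Matrix.of_apply]
      rw [if_neg (by omega)]
      simp
    · have hjm : (j : ℕ) < m := by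
        have := j.isLt
        simp [Fin.ext_iff] at hj
        omega
      rw [if_neg hj]
      simp [hA, hA', hjm]
  have hcol : (fun k : Fin (m+1) => b ^ (m - (k : ℕ))) = fun k => A' k ⟨m, by omega⟩ := by
    funext k
    simp only [hA', Matrix.of_apply]
    rw [if_neg (by omega)]
  have hdetA' : A.det = (b - a) * A'.det := by
    rw [hAup, Matrix.det_updateCol_smul, hcol, Matrix.updateCol_eq_self]
  have hborder : A'.det = detn m (Vrow b (Vrow a X)) := borderA m b (Vrow a X)
  rw [hdetB, hdet3, hdetA, hdetA', hborder]
  ring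

lemma Vrow_comm (x y : ℂ) (X : ℕ → ℕ → ℂ) : Vrow x (Vrow y X) = Vrow y (Vrow x X) := by
  funext i j
  simp only [Vrow]
  ring


/-- Plücker-type determinant identity (Lemma on V_a minors). -/
theorem stmt2 (n : ℕ) (a b c : ℂ) (X : ℕ → ℕ → ℂ) :
    (a - b) * detn n (Vrow a (Vrow b X)) * detn (n + 1) (Vrow c X)
      + (b - c) * detn n (Vrow b (Vrow c X)) * detn (n + 1) (Vrow a X)
      + (c - a) * detn n (Vrow c (Vrow a X)) * detn (n + 1) (Vrow b X) = 0 := by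
  classical
  set w : ℂ → Fin (n+2) → ℂ := fun x k => x ^ (n + 1 - (k : ℕ)) with hw
  set z : Fin (n+2) → ℂ := fun k => X (k : ℕ) n with hz
  have hLw : ∀ x y : ℂ, Lfun n X (w x) (w y) = (x - y) * detn n (Vrow y (Vrow x X)) := by
    intro x y
    exact borderB n x y X
  have hLz : ∀ x : ℂ, Lfun n X z (w x) = detn (n + 1) (Vrow x X) := by
    intro x
    have hmm : Lmat n X z (w x) = Matrix.of (fun k j : Fin (n+2) =>
        if (j : ℕ) < n + 1 then X k j else x ^ (n + 1 - (k : ℕ))) := by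
      ext k j
      by_cases hj : (j : ℕ) < n
      · simp [Lmat, hj, show (j:ℕ) < n + 1 by omega]
        intro h; exact absurd hj (by omega)
      · by_cases hj' : (j : ℕ) = n
        · simp only [Lmat, Matrix.of_apply, hj', hz]
          norm_num
        · rw [Lmat]
          simp only [Matrix.of_apply, if_neg hj, if_neg hj',
            if_neg (show ¬ ((j:ℕ) < n + 1) by omega)]
          rfl
    rw [Lfun, hmm]
    exact borderA (n+1) x X
  have P := plucker n X (w a) (w b) (w c) z
  rw [hLw a b, hLw a c, hLw b c, Lfun_swap n X (w c) z, Lfun_swap n X (w b) z,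
    Lfun_swap n X (w a) z, hLz a, hLz b, hLz c] at P
  rw [Vrow_comm a b X, Vrow_comm b c X]
  linear_combination -P
end
end

section
/- Three-term minor identity: Let X be a matrix with rows (1,…,p+2) and enough columns, Λ the upper shift matrix, V_a = I − aΛ. For a column index set I of size p and two additional column indices k < l, let ξ^J(Y) denote the minor of Y on rows (1,…,|J|) and columns J. Then a·ξ^{(I,k,l)}(X)·ξ^I(V_a X) + ξ^{(I,k)}(X)·ξ^{(I,l)}(V_a X) − ξ^{(I,l)}(X)·ξ^{(I,k)}(V_a X) = 0. -/
open scoped BigOperators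

noncomputable section

/-- The minor of X on rows (1,…,m) and columns J. -/
def xiMinor {m : ℕ} (X : ℕ → ℕ → ℂ) (J : Fin m → ℕ) : ℂ :=
  Matrix.det (Matrix.of fun r c : Fin m => X (r : ℕ) (J c))

namespace Stmt3Aux

open Matrix

/-- Determinant of the matrix whose rows are the given family of vectors. -/
noncomputable def DD {m : ℕ} (f : Fin m → Fin m → ℂ) : ℂ := Matrix.det (Matrix.of f)

lemma cramer_rel (n : ℕ) (d : Fin (n + 1) → Fin n → ℂ) (j : Fin n) :
    ∑ i : Fin (n + 1), (-1) ^ (i : ℕ) * d i j * DD (d ∘ i.succAbove) = 0 := by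
  classical
  set g : Fin (n + 1) → Fin n := Fin.cons j (fun t => t) with hg
  set N : Matrix (Fin (n + 1)) (Fin (n + 1)) ℂ := Matrix.of fun r c => d r (g c) with hN
  have hzero : N.det = 0 := by
    apply Matrix.det_zero_of_column_eq (i := 0) (j := j.succ)
    · exact (Fin.succ_ne_zero j).symm
    · intro r; simp [hN, hg]
  have hexp := Matrix.det_succ_column_zero N
  rw [hzero] at hexp
  have : ∀ i : Fin (n + 1),
      (-1 : ℂ) ^ (i : ℕ) * N i 0 * (N.submatrix i.succAbove Fin.succ).det
        = (-1) ^ (i : ℕ) * d i j * DD (d ∘ i.succAbove) := by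
    intro i
    have h1 : N i 0 = d i j := by simp [hN, hg]
    have h2 : N.submatrix i.succAbove Fin.succ = Matrix.of (d ∘ i.succAbove) := by
      ext r c; simp [hN, hg]
    rw [h1, h2, DD]
  rw [Finset.sum_congr rfl (fun i _ => this i)] at hexp
  exact hexp.symm

lemma det_last_row_single {m : ℕ} (M : Matrix (Fin (m + 1)) (Fin (m + 1)) ℂ)
    (h : ∀ c, M (Fin.last m) c = if c = Fin.last m then 1 else 0) :
    M.det = (M.submatrix Fin.castSucc Fin.castSucc).det := by
  rw [Matrix.det_succ_row M (Fin.last m)]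
  rw [Finset.sum_eq_single (Fin.last m)]
  · have hs : (-1 : ℂ) ^ ((Fin.last m : ℕ) + (Fin.last m : ℕ)) = 1 := by
      rw [← two_mul, pow_mul]; norm_num
    rw [h, if_pos rfl, hs, one_mul, one_mul, Fin.succAbove_last]
  · intro b _ hb; rw [h, if_neg hb]; ring
  · simp

lemma det_snoc_smul_add {m : ℕ} (F : Fin m → Fin (m + 1) → ℂ) (a : ℂ)
    (u v : Fin (m + 1) → ℂ) :
    DD (Fin.snoc F (a • u + v)) = a * DD (Fin.snoc F u) + DD (Fin.snoc F v) := by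
  classical
  have key : ∀ z : Fin (m + 1) → ℂ,
      Matrix.of (Fin.snoc F z) = (Matrix.of (Fin.snoc F u)).updateRow (Fin.last m) z := by
    intro z; ext i c
    refine Fin.lastCases ?_ (fun i => ?_) i
    · simp
    · rw [Matrix.updateRow_ne (Fin.castSucc_lt_last _).ne]
      simp
  unfold DD
  rw [key (a • u + v), key v, Matrix.det_updateRow_add, Matrix.det_updateRow_smul]
  rw [← key u]

lemma det_updateRow_finsum {n : ℕ} (A : Matrix (Fin n) (Fin n) ℂ) (j : Fin n)
    {ι : Type*} (s : Finset ι) (f : ι → Fin n → ℂ) :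
    (A.updateRow j (∑ i ∈ s, f i)).det = ∑ i ∈ s, (A.updateRow j (f i)).det := by
  classical
  induction s using Finset.induction_on with
  | empty =>
      simp only [Finset.sum_empty]
      exact Matrix.det_eq_zero_of_row_eq_zero j (fun c => by simp)
  | insert _ _ hk ih =>
      rw [Finset.sum_insert hk, Matrix.det_updateRow_add, ih, Finset.sum_insert hk]

lemma pluecker {p : ℕ} (b : Fin p → Fin (p + 2) → ℂ) (x y u e : Fin (p + 2) → ℂ) :
    DD (Fin.snoc (Fin.snoc b x) y) * DD (Fin.snoc (Fin.snoc b u) e)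
      - DD (Fin.snoc (Fin.snoc b x) u) * DD (Fin.snoc (Fin.snoc b y) e)
      + DD (Fin.snoc (Fin.snoc b x) e) * DD (Fin.snoc (Fin.snoc b y) u) = 0 := by
  classical
  set d : Fin (p + 3) → Fin (p + 2) → ℂ := Fin.snoc (Fin.snoc (Fin.snoc b y) u) e with hd
  set B : Matrix (Fin (p + 2)) (Fin (p + 2)) ℂ := Matrix.of (Fin.snoc (Fin.snoc b x) u) with hB
  set c : Fin (p + 3) → ℂ := fun i => (-1) ^ (i : ℕ) * DD (d ∘ i.succAbove) with hc
  have hrow : ∀ z : Fin (p + 2) → ℂ,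
      Matrix.of (Fin.snoc (Fin.snoc b x) z) = B.updateRow (Fin.last (p + 1)) z := by
    intro z; ext i cc
    refine Fin.lastCases ?_ (fun i => ?_) i
    · simp [hB]
    · rw [Matrix.updateRow_ne (Fin.castSucc_lt_last _).ne]; simp [hB]
  have hS : ∑ i : Fin (p + 3), c i * DD (Fin.snoc (Fin.snoc b x) (d i)) = 0 := by
    have h1 : ∀ i : Fin (p + 3), c i * DD (Fin.snoc (Fin.snoc b x) (d i))
        = (B.updateRow (Fin.last (p + 1)) (c i • d i)).det := by
      intro i
      rw [DD, hrow (d i), Matrix.det_updateRow_smul]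
    rw [Finset.sum_congr rfl fun i _ => h1 i, ← det_updateRow_finsum]
    have hzero : (∑ i : Fin (p + 3), c i • d i) = 0 := by
      funext j
      have h0 := cramer_rel (p + 2) d j
      have h2 : ∀ i : Fin (p + 3), (c i • d i) j
          = (-1) ^ (i : ℕ) * d i j * DD (d ∘ i.succAbove) := by
        intro i; simp only [Pi.smul_apply, smul_eq_mul, hc]; ring
      calc (∑ i : Fin (p + 3), c i • d i) j = ∑ i : Fin (p + 3), (c i • d i) j := by
            rw [Finset.sum_apply]
        _ = ∑ i : Fin (p + 3), (-1) ^ (i : ℕ) * d i j * DD (d ∘ i.succAbove) :=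
            Finset.sum_congr rfl fun i _ => h2 i
        _ = 0 := h0
    rw [hzero]
    exact Matrix.det_eq_zero_of_row_eq_zero (Fin.last (p + 1)) (fun cc => by simp)
  rw [Fin.sum_univ_castSucc, Fin.sum_univ_castSucc, Fin.sum_univ_castSucc] at hS
  have hvan : ∀ i : Fin p,
      c i.castSucc.castSucc.castSucc
        * DD (Fin.snoc (Fin.snoc b x) (d i.castSucc.castSucc.castSucc)) = 0 := by
    intro i
    have hdval : d i.castSucc.castSucc.castSucc = b i := by simp [hd]
    have : DD (Fin.snoc (Fin.snoc b x) (b i)) = 0 := by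
      apply Matrix.det_zero_of_row_eq
        (i := (i.castSucc.castSucc : Fin (p + 2))) (j := Fin.last (p + 1))
      · exact (Fin.castSucc_lt_last _).ne
      · funext cc; simp [Fin.snoc_castSucc]
    rw [hdval, this, mul_zero]
  rw [Finset.sum_congr rfl (fun i _ => hvan i), Finset.sum_const_zero, zero_add] at hS
  have hv1 : d ((Fin.last p).castSucc.castSucc) = y := by simp [hd]
  have hv2 : d ((Fin.last (p + 1)).castSucc) = u := by simp [hd]
  have hv3 : d (Fin.last (p + 2)) = e := by simp [hd]
  have hm1 : d ∘ (Fin.last (p + 2)).succAbove = Fin.snoc (Fin.snoc b y) u := by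
    rw [Fin.succAbove_last, hd, Fin.snoc_comp_castSucc]
  have hm2 : d ∘ ((Fin.last (p + 1)).castSucc).succAbove = Fin.snoc (Fin.snoc b y) e := by
    funext r
    refine Fin.lastCases ?_ (fun r' => ?_) r
    · rw [Function.comp_apply, Fin.succAbove_of_le_castSucc _ _ (le_refl _), Fin.succ_last]
      simp [hd]
    · rw [Function.comp_apply, Fin.succAbove_of_castSucc_lt _ _ (by
        simp [Fin.lt_def]; have := r'.isLt; omega)]
      simp [hd]
  have hm3 : d ∘ ((Fin.last p).castSucc.castSucc).succAbove = Fin.snoc (Fin.snoc b u) e := by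
    funext r
    refine Fin.lastCases ?_ (fun r' => ?_) r
    · rw [Function.comp_apply, Fin.succAbove_of_le_castSucc _ _ (by simp [Fin.le_def]),
        Fin.succ_last]
      simp [hd]
    · refine Fin.lastCases ?_ (fun r'' => ?_) r'
      · rw [Function.comp_apply, Fin.succAbove_of_le_castSucc _ _ (by simp [Fin.le_def]),
          Fin.succ_castSucc, Fin.succ_last]
        simp [hd]
      · rw [Function.comp_apply, Fin.succAbove_of_castSucc_lt _ _ (by
          simp [Fin.lt_def])]
        simp [hd]
  have hc1 : c ((Fin.last p).castSucc.castSucc)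
      = (-1 : ℂ) ^ p * DD (Fin.snoc (Fin.snoc b u) e) := by
    simp only [hc, hm3, Fin.coe_castSucc, Fin.val_last]
  have hc2 : c ((Fin.last (p + 1)).castSucc)
      = (-1 : ℂ) ^ (p + 1) * DD (Fin.snoc (Fin.snoc b y) e) := by
    simp only [hc, hm2, Fin.coe_castSucc, Fin.val_last]
  have hc3 : c (Fin.last (p + 2))
      = (-1 : ℂ) ^ (p + 2) * DD (Fin.snoc (Fin.snoc b y) u) := by
    simp only [hc, hm1, Fin.val_last]
  rw [hv1, hv2, hv3, hc1, hc2, hc3] at hS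
  have hpow : (-1 : ℂ) ^ p ≠ 0 := pow_ne_zero _ (by norm_num)
  apply mul_left_cancel₀ hpow
  rw [mul_zero]
  rw [pow_succ, pow_succ] at hS
  linear_combination hS

/-- The transpose of `V_a` acting on coordinates. -/
def Tmat (n : ℕ) (a : ℂ) : Matrix (Fin n) (Fin n) ℂ :=
  Matrix.of fun s r : Fin n =>
    if (s : ℕ) = (r : ℕ) then 1 else if (s : ℕ) = (r : ℕ) + 1 then -a else 0

lemma Tmat_self {n : ℕ} (a : ℂ) (r : Fin n) : Tmat n a r r = 1 := by
  simp [Tmat]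

lemma Tmat_sub {n : ℕ} (a : ℂ) (r : Fin n) (h : (r : ℕ) + 1 < n) :
    Tmat n a ⟨(r : ℕ) + 1, h⟩ r = -a := by
  simp only [Tmat, Matrix.of_apply]
  rw [if_neg (by omega)]
  simp

lemma Tmat_ne {n : ℕ} (a : ℂ) (s r : Fin n) (h1 : (s : ℕ) ≠ (r : ℕ))
    (h2 : (s : ℕ) ≠ (r : ℕ) + 1) : Tmat n a s r = 0 := by
  simp only [Tmat, Matrix.of_apply]
  rw [if_neg h1, if_neg h2]

lemma detT (n : ℕ) (a : ℂ) : (Tmat n a).det = 1 := by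
  rw [Matrix.det_of_lowerTriangular]
  · apply Finset.prod_eq_one; intro i _; exact Tmat_self a i
  · intro i j hij
    have h : i < j := hij
    exact Tmat_ne a i j (by omega) (by omega)

lemma mulT_apply {n : ℕ} (a : ℂ) (f : Fin n → Fin n → ℂ) (c r : Fin n) :
    (Matrix.of f * Tmat n a) c r
      = f c r - a * (if h : (r : ℕ) + 1 < n then f c ⟨(r : ℕ) + 1, h⟩ else 0) := by
  rw [Matrix.mul_apply]
  simp only [Matrix.of_apply]
  by_cases h : (r : ℕ) + 1 < n
  · rw [dif_pos h]
    have key : ∀ s : Fin n,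
        f c s * Tmat n a s r
          = (if s = r then f c r else 0)
            + (if s = (⟨(r : ℕ) + 1, h⟩ : Fin n) then -a * f c ⟨(r : ℕ) + 1, h⟩ else 0) := by
      intro s
      by_cases h1 : s = r
      · subst h1
        rw [if_pos rfl, if_neg (by simp [Fin.ext_iff]), add_zero, Tmat_self, mul_one]
      · by_cases h2 : s = (⟨(r : ℕ) + 1, h⟩ : Fin n)
        · subst h2
          rw [if_neg h1, if_pos rfl, zero_add, Tmat_sub]
          ring
        · rw [if_neg h1, if_neg h2, add_zero,
            Tmat_ne a s r (by simpa [Fin.ext_iff] using h1) (by simpa [Fin.ext_iff] using h2),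
            mul_zero]
    rw [Finset.sum_congr rfl fun s _ => key s, Finset.sum_add_distrib]
    rw [Finset.sum_ite_eq' Finset.univ r (fun _ => f c r),
      Finset.sum_ite_eq' Finset.univ (⟨(r : ℕ) + 1, h⟩ : Fin n)
        (fun _ => -a * f c ⟨(r : ℕ) + 1, h⟩)]
    simp only [Finset.mem_univ, if_true]
    ring
  · rw [dif_neg h]
    have key : ∀ s : Fin n, f c s * Tmat n a s r = if s = r then f c r else 0 := by
      intro s
      by_cases h1 : s = r
      · subst h1; rw [if_pos rfl, Tmat_self, mul_one]
      · rw [if_neg h1,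
          Tmat_ne a s r (by simpa [Fin.ext_iff] using h1) (by have := s.isLt; omega), mul_zero]
    rw [Finset.sum_congr rfl fun s _ => key s, Finset.sum_ite_eq' Finset.univ r (fun _ => f c r)]
    simp only [Finset.mem_univ, if_true]
    ring

lemma det_mulT {n : ℕ} (a : ℂ) (f : Fin n → Fin n → ℂ) :
    DD f = (Matrix.of f * Tmat n a).det := by
  rw [Matrix.det_mul, detT, mul_one, DD]

lemma xiMinor_eq_DD {m : ℕ} (Y : ℕ → ℕ → ℂ) (J : Fin m → ℕ) :
    xiMinor Y J = DD (fun c r => Y (r : ℕ) (J c)) := by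
  unfold xiMinor DD
  rw [← Matrix.det_transpose]
  rfl


lemma transB (p : ℕ) (X : ℕ → ℕ → ℂ) (I : Fin p → ℕ) (kk : ℕ) :
    xiMinor X (Fin.snoc I kk)
      = DD (Fin.snoc (Fin.snoc (fun (j : Fin p) (r : Fin (p + 2)) => X (r : ℕ) (I j))
          (fun r : Fin (p + 2) => X (r : ℕ) kk))
          (fun r : Fin (p + 2) => if (r : ℕ) = p + 1 then 1 else 0)) := by
  rw [xiMinor_eq_DD]
  set G : Fin (p + 2) → Fin (p + 2) → ℂ :=
    Fin.snoc (Fin.snoc (fun (j : Fin p) (r : Fin (p + 2)) => X (r : ℕ) (I j))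
      (fun r : Fin (p + 2) => X (r : ℕ) kk))
      (fun r : Fin (p + 2) => if (r : ℕ) = p + 1 then 1 else 0) with hG
  have hGe : G (Fin.last (p + 1)) = fun r : Fin (p + 2) => if (r : ℕ) = p + 1 then 1 else 0 := by
    rw [hG, Fin.snoc_last]
  have hlast : ∀ cc, (Matrix.of G) (Fin.last (p + 1)) cc
      = if cc = Fin.last (p + 1) then 1 else 0 := by
    intro cc
    rw [Matrix.of_apply, hGe]
    by_cases hc : cc = Fin.last (p + 1)
    · subst hc; simp
    · rw [if_neg hc]
      exact if_neg (by simpa [Fin.ext_iff] using hc)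
  have hexp := det_last_row_single (Matrix.of G) hlast
  unfold DD
  rw [hexp]
  congr 1
  ext c r
  simp only [Matrix.submatrix_apply, Matrix.of_apply]
  refine Fin.lastCases ?_ (fun c' => ?_) c
  · simp [hG, Fin.snoc_castSucc, Fin.snoc_last]
  · simp [hG, Fin.snoc_castSucc]

lemma transC (p : ℕ) (a : ℂ) (X : ℕ → ℕ → ℂ) (I : Fin p → ℕ) (kk : ℕ) :
    xiMinor (Vrow a X) (Fin.snoc I kk)
      = DD (Fin.snoc (Fin.snoc (fun (j : Fin p) (r : Fin (p + 2)) => X (r : ℕ) (I j))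
          (fun r : Fin (p + 2) => X (r : ℕ) kk))
          (fun r : Fin (p + 2) => a ^ (p + 1 - (r : ℕ)))) := by
  rw [xiMinor_eq_DD]
  set G : Fin (p + 2) → Fin (p + 2) → ℂ :=
    Fin.snoc (Fin.snoc (fun (j : Fin p) (r : Fin (p + 2)) => X (r : ℕ) (I j))
      (fun r : Fin (p + 2) => X (r : ℕ) kk))
      (fun r : Fin (p + 2) => a ^ (p + 1 - (r : ℕ))) with hG
  rw [det_mulT a G]
  set N : Matrix (Fin (p + 2)) (Fin (p + 2)) ℂ := Matrix.of G * Tmat (p + 2) a with hN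
  have hGw : G (Fin.last (p + 1)) = fun r : Fin (p + 2) => a ^ (p + 1 - (r : ℕ)) := by
    rw [hG, Fin.snoc_last]
  have hlast : ∀ cc, N (Fin.last (p + 1)) cc = if cc = Fin.last (p + 1) then 1 else 0 := by
    intro cc
    rw [hN, mulT_apply, hGw]
    by_cases hc : cc = Fin.last (p + 1)
    · subst hc
      rw [dif_neg (by simp)]
      simp
    · have hlt : (cc : ℕ) < p + 1 := by
        have h2 := cc.isLt
        simp only [Fin.ext_iff, Fin.val_last] at hc
        omega
      rw [dif_pos (by omega), if_neg hc]
      simp only [Fin.val_mk]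
      have e1 : p + 1 - (cc : ℕ) = (p + 1 - ((cc : ℕ) + 1)) + 1 := by omega
      rw [e1, pow_succ]
      ring
  have hexp := det_last_row_single N hlast
  rw [hexp]
  congr 1
  ext c r
  show _ = N c.castSucc r.castSucc
  rw [hN, mulT_apply, dif_pos (by have := r.isLt; simp only [Fin.coe_castSucc]; omega)]
  simp only [Fin.val_mk, Fin.coe_castSucc, Matrix.of_apply]
  refine Fin.lastCases ?_ (fun c' => ?_) c
  · simp [hG, Fin.snoc_castSucc, Fin.snoc_last, Vrow]
  · simp [hG, Fin.snoc_castSucc, Vrow]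

lemma transD (p : ℕ) (a : ℂ) (X : ℕ → ℕ → ℂ) (I : Fin p → ℕ) :
    xiMinor (Vrow a X) I
      = DD (Fin.snoc (Fin.snoc (fun (j : Fin p) (r : Fin (p + 2)) => X (r : ℕ) (I j))
          (fun r : Fin (p + 2) => if (r : ℕ) = p + 1 then 0 else a ^ (p - (r : ℕ))))
          (fun r : Fin (p + 2) => if (r : ℕ) = p + 1 then 1 else 0)) := by
  rw [xiMinor_eq_DD]
  set G : Fin (p + 2) → Fin (p + 2) → ℂ :=
    Fin.snoc (Fin.snoc (fun (j : Fin p) (r : Fin (p + 2)) => X (r : ℕ) (I j))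
      (fun r : Fin (p + 2) => if (r : ℕ) = p + 1 then 0 else a ^ (p - (r : ℕ))))
      (fun r : Fin (p + 2) => if (r : ℕ) = p + 1 then 1 else 0) with hG
  rw [det_mulT a G]
  set N : Matrix (Fin (p + 2)) (Fin (p + 2)) ℂ := Matrix.of G * Tmat (p + 2) a with hN
  have hGu : G ((Fin.last p).castSucc)
      = fun r : Fin (p + 2) => if (r : ℕ) = p + 1 then 0 else a ^ (p - (r : ℕ)) := by
    rw [hG, Fin.snoc_castSucc, Fin.snoc_last]
  have hGe : G (Fin.last (p + 1)) = fun r : Fin (p + 2) => if (r : ℕ) = p + 1 then 1 else 0 := by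
    rw [hG, Fin.snoc_last]
  have hGb : ∀ j : Fin p, G (j.castSucc.castSucc) = fun r : Fin (p + 2) => X (r : ℕ) (I j) := by
    intro j; rw [hG, Fin.snoc_castSucc, Fin.snoc_castSucc]
  have hne : Fin.last (p + 1) ≠ (Fin.last p).castSucc := by
    simp [Fin.ext_iff]
  set N' : Matrix (Fin (p + 2)) (Fin (p + 2)) ℂ :=
    N.updateRow (Fin.last (p + 1))
      (N (Fin.last (p + 1)) + a • N ((Fin.last p).castSucc)) with hN'
  have h2 : N'.det = N.det := Matrix.det_updateRow_add_smul_self N hne a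
  have hsub : ∀ (c r : Fin (p + 1)),
      (N'.submatrix Fin.castSucc Fin.castSucc) c r = N c.castSucc r.castSucc := by
    intro c r
    rw [Matrix.submatrix_apply, hN', Matrix.updateRow_ne (Fin.castSucc_lt_last c).ne]
  have hlast : ∀ cc, N' (Fin.last (p + 1)) cc = if cc = Fin.last (p + 1) then 1 else 0 := by
    intro cc
    rw [hN', Matrix.updateRow_self]
    simp only [Pi.add_apply, Pi.smul_apply, smul_eq_mul]
    rw [hN, mulT_apply, mulT_apply, hGu, hGe]
    by_cases hc : cc = Fin.last (p + 1)
    · subst hc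
      rw [dif_neg (by simp), dif_neg (by simp)]
      simp
    · have hlt : (cc : ℕ) < p + 1 := by
        have h3 := cc.isLt
        simp only [Fin.ext_iff, Fin.val_last] at hc
        omega
      rw [dif_pos (by omega), dif_pos (by omega), if_neg hc]
      simp only [Fin.val_mk]
      by_cases hcp : (cc : ℕ) = p
      · rw [if_neg (by omega), if_pos (by omega), if_neg (by omega), if_pos (by omega)]
        rw [hcp, Nat.sub_self, pow_zero]
        ring
      · rw [if_neg (by omega), if_neg (by omega), if_neg (by omega), if_neg (by omega)]
        have e1 : p - (cc : ℕ) = (p - ((cc : ℕ) + 1)) + 1 := by omega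
        rw [e1, pow_succ]
        ring
  have hexp := det_last_row_single N' hlast
  have hlast2 : ∀ r : Fin (p + 1),
      (N'.submatrix Fin.castSucc Fin.castSucc) (Fin.last p) r
        = if r = Fin.last p then 1 else 0 := by
    intro r
    rw [hsub, hN, mulT_apply, hGu,
      dif_pos (by have := r.isLt; simp only [Fin.coe_castSucc]; omega)]
    simp only [Fin.val_mk, Fin.coe_castSucc]
    by_cases hr : (r : ℕ) = p
    · rw [if_neg (by omega), if_pos (by omega), if_pos (by simpa [Fin.ext_iff] using hr)]
      rw [hr, Nat.sub_self, pow_zero]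
      ring
    · have hlt : (r : ℕ) < p := by have := r.isLt; omega
      rw [if_neg (by omega), if_neg (by omega), if_neg (by simpa [Fin.ext_iff] using hr)]
      have e1 : p - (r : ℕ) = (p - ((r : ℕ) + 1)) + 1 := by omega
      rw [e1, pow_succ]
      ring
  have hexp2 := det_last_row_single (N'.submatrix Fin.castSucc Fin.castSucc) hlast2
  rw [← h2, hexp, hexp2]
  congr 1
  ext c r
  show Vrow a X (r : ℕ) (I c) = N' c.castSucc.castSucc r.castSucc.castSucc
  have hne2 : (c.castSucc.castSucc : Fin (p + 2)) ≠ Fin.last (p + 1) :=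
    (Fin.castSucc_lt_last _).ne
  rw [hN', Matrix.updateRow_ne hne2, hN, mulT_apply,
    dif_pos (by have := r.isLt; simp only [Fin.coe_castSucc]; omega), hGb c]
  simp [Vrow]

end Stmt3Aux

open Stmt3Aux

/-- Three-term minor identity. -/
theorem stmt3 (p : ℕ) (a : ℂ) (X : ℕ → ℕ → ℂ) (I : Fin p → ℕ)
    (hI : StrictMono I) (k l : ℕ) (hIk : ∀ r, I r < k) (hkl : k < l) :
    a * xiMinor X (Fin.snoc (Fin.snoc I k) l) * xiMinor (Vrow a X) I
      + xiMinor X (Fin.snoc I k) * xiMinor (Vrow a X) (Fin.snoc I l)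
      - xiMinor X (Fin.snoc I l) * xiMinor (Vrow a X) (Fin.snoc I k) = 0 := by
  have hA : xiMinor X (Fin.snoc (Fin.snoc I k) l)
      = DD (Fin.snoc (Fin.snoc (fun (j : Fin p) (r : Fin (p + 2)) => X (r : ℕ) (I j))
          (fun r : Fin (p + 2) => X (r : ℕ) k)) (fun r : Fin (p + 2) => X (r : ℕ) l)) := by
    rw [xiMinor_eq_DD]
    unfold DD
    congr 1
    ext c r
    simp only [Matrix.of_apply]
    refine Fin.lastCases ?_ (fun c' => ?_) c
    · simp [Fin.snoc_last]
    · refine Fin.lastCases ?_ (fun c'' => ?_) c' <;>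
        simp [Fin.snoc_castSucc, Fin.snoc_last]
  have hB := transB p X I k
  have hE := transB p X I l
  have hC := transC p a X I k
  have hF := transC p a X I l
  have hD := transD p a X I
  have hw : (fun r : Fin (p + 2) => a ^ (p + 1 - (r : ℕ)))
      = a • (fun r : Fin (p + 2) => if (r : ℕ) = p + 1 then 0 else a ^ (p - (r : ℕ)))
        + (fun r : Fin (p + 2) => if (r : ℕ) = p + 1 then 1 else 0) := by
    funext r
    simp only [Pi.add_apply, Pi.smul_apply, smul_eq_mul]
    by_cases hr : (r : ℕ) = p + 1
    · rw [if_pos hr, if_pos hr, hr]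
      simp
    · have hlt : (r : ℕ) < p + 1 := by have := r.isLt; omega
      rw [if_neg hr, if_neg hr]
      have e1 : p + 1 - (r : ℕ) = (p - (r : ℕ)) + 1 := by omega
      rw [e1, pow_succ]
      ring
  have hyw : DD (Fin.snoc (Fin.snoc (fun (j : Fin p) (r : Fin (p + 2)) => X (r : ℕ) (I j))
          (fun r : Fin (p + 2) => X (r : ℕ) l))
          (fun r : Fin (p + 2) => a ^ (p + 1 - (r : ℕ))))
      = a * DD (Fin.snoc (Fin.snoc (fun (j : Fin p) (r : Fin (p + 2)) => X (r : ℕ) (I j))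
          (fun r : Fin (p + 2) => X (r : ℕ) l))
          (fun r : Fin (p + 2) => if (r : ℕ) = p + 1 then 0 else a ^ (p - (r : ℕ))))
        + DD (Fin.snoc (Fin.snoc (fun (j : Fin p) (r : Fin (p + 2)) => X (r : ℕ) (I j))
          (fun r : Fin (p + 2) => X (r : ℕ) l))
          (fun r : Fin (p + 2) => if (r : ℕ) = p + 1 then 1 else 0)) := by
    rw [hw, det_snoc_smul_add]
  have hxw : DD (Fin.snoc (Fin.snoc (fun (j : Fin p) (r : Fin (p + 2)) => X (r : ℕ) (I j))
          (fun r : Fin (p + 2) => X (r : ℕ) k))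
          (fun r : Fin (p + 2) => a ^ (p + 1 - (r : ℕ))))
      = a * DD (Fin.snoc (Fin.snoc (fun (j : Fin p) (r : Fin (p + 2)) => X (r : ℕ) (I j))
          (fun r : Fin (p + 2) => X (r : ℕ) k))
          (fun r : Fin (p + 2) => if (r : ℕ) = p + 1 then 0 else a ^ (p - (r : ℕ))))
        + DD (Fin.snoc (Fin.snoc (fun (j : Fin p) (r : Fin (p + 2)) => X (r : ℕ) (I j))
          (fun r : Fin (p + 2) => X (r : ℕ) k))
          (fun r : Fin (p + 2) => if (r : ℕ) = p + 1 then 1 else 0)) := by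
    rw [hw, det_snoc_smul_add]
  have hp := pluecker (fun (j : Fin p) (r : Fin (p + 2)) => X (r : ℕ) (I j))
    (fun r : Fin (p + 2) => X (r : ℕ) k) (fun r : Fin (p + 2) => X (r : ℕ) l)
    (fun r : Fin (p + 2) => if (r : ℕ) = p + 1 then 0 else a ^ (p - (r : ℕ)))
    (fun r : Fin (p + 2) => if (r : ℕ) = p + 1 then 1 else 0)
  rw [hA, hB, hC, hD, hE, hF, hyw, hxw]
  linear_combination a * hp
end
end

section
/- Backlund-type bilinear equation for q-Schur functions: for any partition λ, integers k < l, and any index i ∈ {1,…,M}: t_i·S_{(l−1,k,λ)}·T_i(S_λ) + S_{(k,λ)}·T_i(S_{(l,λ)}) − S_{(l,λ)}·T_i(S_{(k,λ)}) = 0. -/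
open scoped BigOperators

noncomputable section

lemma qPoch_ne_zero {q : ℂ} (hgen : ∀ n : ℕ, 1 ≤ n → q ^ n ≠ 1) (n : ℕ) :
    qPoch q n ≠ 0 := by
  refine Finset.prod_ne_zero_iff.2 fun j _ => ?_
  exact sub_ne_zero.2 (fun h => hgen (j+1) (by omega) h.symm)

lemma qPoch_succ (q : ℂ) (n : ℕ) : qPoch q (n+1) = qPoch q n * (1 - q ^ (n+1)) :=
  Finset.prod_range_succ _ _

lemma hco_qshift (M : ℕ) (q : ℂ) (hgen : ∀ n : ℕ, 1 ≤ n → q ^ n ≠ 1)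
    (i : Fin M) (t : Fin M → ℂ) (n : ℤ) :
    hco M q n (qshift M q i t) = hco M q n t - t i * hco M q (n-1) t := by
  rcases le_or_gt 0 n with hn | hn
  · set N := n.toNat with hN
    have key : ∑ ν ∈ Finset.Nat.antidiagonalTuple M N,
          (1 - q ^ ν i) * ∏ j, t j ^ ν j / qPoch q (ν j)
        = t i * hco M q (n-1) t := by
      rcases Nat.eq_zero_or_pos N with h0 | hpos
      · rw [h0, Finset.Nat.antidiagonalTuple_zero_right]
        rw [Finset.sum_singleton]
        have : hco M q (n-1) t = 0 := by
          rw [hco, if_neg]; omega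
        simp [this]
      · have hn1 : hco M q (n-1) t
            = ∑ ν ∈ Finset.Nat.antidiagonalTuple M (N-1), ∏ j, t j ^ ν j / qPoch q (ν j) := by
          rw [hco, if_pos (by omega)]
          congr 1
          congr 1
          omega
        rw [hn1, Finset.mul_sum]
        rw [← Finset.sum_filter_of_ne (p := fun ν => ν i ≠ 0) ?zero]
        case zero =>
          intro ν _ hne hνi
          exact hne (by simp [hνi])
        refine Finset.sum_nbij' (fun ν => Function.update ν i (ν i - 1))
          (fun μ => Function.update μ i (μ i + 1)) ?_ ?_ ?_ ?_ ?_
        · intro ν hν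
          simp only [Finset.mem_filter, Finset.Nat.mem_antidiagonalTuple] at hν ⊢
          rw [Finset.sum_update_of_mem (Finset.mem_univ i)]
          simp only [← Finset.erase_eq]
          have := Finset.add_sum_erase Finset.univ ν (Finset.mem_univ i)
          omega
        · intro μ hμ
          simp only [Finset.mem_filter, Finset.Nat.mem_antidiagonalTuple] at hμ ⊢
          rw [Finset.sum_update_of_mem (Finset.mem_univ i)]
          simp only [← Finset.erase_eq]
          have := Finset.add_sum_erase Finset.univ μ (Finset.mem_univ i)
          constructor
          · omega
          · simp
        · intro ν hν
          simp only [Finset.mem_filter] at hν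
          funext j
          rcases eq_or_ne j i with rfl | hj
          · simp only [Function.update_self]
            omega
          · simp [Function.update_of_ne hj]
        · intro μ _
          funext j
          rcases eq_or_ne j i with rfl | hj
          · simp
          · simp [Function.update_of_ne hj]
        · intro ν hν
          simp only [Finset.mem_filter] at hν
          obtain ⟨-, hνi⟩ := hν
          set ν' := Function.update ν i (ν i - 1) with hν'
          have e1 := (Finset.mul_prod_erase Finset.univ
            (fun j => t j ^ ν j / qPoch q (ν j)) (Finset.mem_univ i)).symm
          have e2 := (Finset.mul_prod_erase Finset.univ
            (fun j => t j ^ ν' j / qPoch q (ν' j)) (Finset.mem_univ i)).symm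
          have e3 : ∏ j ∈ Finset.univ.erase i, t j ^ ν' j / qPoch q (ν' j)
              = ∏ j ∈ Finset.univ.erase i, t j ^ ν j / qPoch q (ν j) := by
            refine Finset.prod_congr rfl fun j hj => ?_
            have hj : j ≠ i := (Finset.mem_erase.1 hj).1
            simp [hν', Function.update_of_ne hj]
          rw [e1, e2, e3, ← mul_assoc, ← mul_assoc]
          congr 1
          have hνi' : ν' i = ν i - 1 := by simp [hν']
          rw [hνi']
          obtain ⟨c, hc⟩ : ∃ c, ν i = c + 1 := ⟨ν i - 1, by omega⟩
          rw [hc]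
          simp only [Nat.add_sub_cancel]
          have h1 : qPoch q c ≠ 0 := qPoch_ne_zero hgen c
          have h2 : (1 : ℂ) - q ^ (c+1) ≠ 0 :=
            sub_ne_zero.2 (fun h => hgen (c+1) (by omega) h.symm)
          rw [qPoch_succ, pow_succ (t i)]
          field_simp
    have hL : hco M q n (qshift M q i t)
        = ∑ ν ∈ Finset.Nat.antidiagonalTuple M N,
            q ^ ν i * ∏ j, t j ^ ν j / qPoch q (ν j) := by
      rw [hco, if_pos hn]
      refine Finset.sum_congr rfl fun ν _ => ?_
      have e1 := (Finset.mul_prod_erase Finset.univ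
        (fun j => qshift M q i t j ^ ν j / qPoch q (ν j)) (Finset.mem_univ i)).symm
      have e2 := (Finset.mul_prod_erase Finset.univ
        (fun j => t j ^ ν j / qPoch q (ν j)) (Finset.mem_univ i)).symm
      have e3 : ∏ j ∈ Finset.univ.erase i, qshift M q i t j ^ ν j / qPoch q (ν j)
          = ∏ j ∈ Finset.univ.erase i, t j ^ ν j / qPoch q (ν j) := by
        refine Finset.prod_congr rfl fun j hj => ?_
        have hj : j ≠ i := (Finset.mem_erase.1 hj).1
        simp [qshift, Function.update_of_ne hj]
      rw [e1, e3, e2, ← mul_assoc]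
      congr 1
      simp [qshift, mul_pow, mul_div_assoc]
    have hR : hco M q n t = ∑ ν ∈ Finset.Nat.antidiagonalTuple M N,
        ∏ j, t j ^ ν j / qPoch q (ν j) := by rw [hco, if_pos hn]
    rw [hL, hR, ← key]
    rw [← Finset.sum_sub_distrib]
    refine Finset.sum_congr rfl fun ν _ => ?_
    ring
  · have h1 : hco M q n (qshift M q i t) = 0 := by rw [hco, if_neg (by omega)]
    have h2 : hco M q n t = 0 := by rw [hco, if_neg (by omega)]
    have h3 : hco M q (n-1) t = 0 := by rw [hco, if_neg (by omega)]
    rw [h1, h2, h3]; ring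

lemma hco_congr (M : ℕ) (q : ℂ) {A B : ℤ} (t : Fin M → ℂ) (h : A = B) :
    hco M q A t = hco M q B t := by rw [h]


lemma det_row0_unit {n : ℕ} (A : Matrix (Fin (n+1)) (Fin (n+1)) ℂ)
    (h0 : ∀ c, A 0 c = if c = 0 then 1 else 0) :
    A.det = (A.submatrix Fin.succ Fin.succ).det := by
  rw [Matrix.det_succ_row_zero, Finset.sum_eq_single 0]
  · simp [h0]
  · intro j _ hj
    simp [h0 j, hj]
  · simp

lemma dep {n : ℕ} (v : Fin (n+1) → Fin n → ℂ) (c : Fin n) :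
    ∑ j : Fin (n+1), (-1)^(j:ℕ) * v j c *
      Matrix.det (Matrix.of fun a b => v (j.succAbove a) b) = 0 := by
  have hdet : (Matrix.of fun (j : Fin (n+1)) (d : Fin (n+1)) =>
      (Fin.cases (v j c) (fun d' => v j d') d : ℂ)).det = 0 := by
    refine Matrix.det_zero_of_column_eq (i := 0) (j := c.succ)
      (Fin.succ_ne_zero c).symm fun k => ?_
    simp
  rw [Matrix.det_succ_column_zero] at hdet
  rw [← hdet]
  refine Finset.sum_congr rfl fun j _ => ?_
  have e1 : (Matrix.of fun (j : Fin (n+1)) (d : Fin (n+1)) =>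
      (Fin.cases (v j c) (fun d' => v j d') d : ℂ)) j 0 = v j c := by simp
  have e2 : ((Matrix.of fun (j : Fin (n+1)) (d : Fin (n+1)) =>
      (Fin.cases (v j c) (fun d' => v j d') d : ℂ)).submatrix j.succAbove Fin.succ)
      = Matrix.of fun a b => v (j.succAbove a) b := by
    ext a b
    simp
  rw [e1, e2]

lemma det_expand_row1 {m : ℕ} (w : Fin m → Fin (m+2) → ℂ) (x0 y : Fin (m+2) → ℂ) :
    Matrix.det (Matrix.of (Fin.cons x0 (Fin.cons y w))) =
      ∑ c, y c * Matrix.det (Matrix.of (Fin.cons x0 (Fin.cons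
        (fun d => if c = d then (1:ℂ) else 0) w))) := by
  have hrow : ∀ z : Fin (m+2) → ℂ,
      (Fin.cons x0 (Fin.cons z w) : Fin (m+2) → Fin (m+2) → ℂ) =
        Function.update (Fin.cons x0 (Fin.cons y w) : Fin (m+2) → Fin (m+2) → ℂ)
          ((0 : Fin (m+1)).succ) z := by
    intro z
    rw [← Fin.cons_update, Fin.update_cons_zero]
  have hdet : ∀ z : Fin (m+2) → ℂ,
      Matrix.det (Matrix.of (Fin.cons x0 (Fin.cons z w))) =
        Matrix.detRowAlternating
          (Function.update (Fin.cons x0 (Fin.cons y w) : Fin (m+2) → Fin (m+2) → ℂ)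
            ((0 : Fin (m+1)).succ) z) := by
    intro z
    rw [← hrow z]
    rfl
  rw [hdet y]
  have hy := pi_eq_sum_univ y (R := ℂ)
  rw [show Function.update (Fin.cons x0 (Fin.cons y w) : Fin (m+2) → Fin (m+2) → ℂ)
        ((0 : Fin (m+1)).succ) y
      = Function.update (Fin.cons x0 (Fin.cons y w) : Fin (m+2) → Fin (m+2) → ℂ)
        ((0 : Fin (m+1)).succ) (∑ c, y c • fun d => if c = d then (1:ℂ) else 0) from by
    rw [← hy]]
  rw [AlternatingMap.map_update_sum]
  refine Finset.sum_congr rfl fun c _ => ?_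
  rw [AlternatingMap.map_update_smul, smul_eq_mul, hdet (fun d => if c = d then (1:ℂ) else 0)]

lemma pluecker {m : ℕ} (w : Fin m → Fin (m+2) → ℂ) (x0 x1 x2 x3 : Fin (m+2) → ℂ) :
    Matrix.det (Matrix.of (Fin.cons x2 (Fin.cons x3 w)))
      * Matrix.det (Matrix.of (Fin.cons x0 (Fin.cons x1 w)))
    - Matrix.det (Matrix.of (Fin.cons x1 (Fin.cons x3 w)))
      * Matrix.det (Matrix.of (Fin.cons x0 (Fin.cons x2 w)))
    + Matrix.det (Matrix.of (Fin.cons x1 (Fin.cons x2 w)))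
      * Matrix.det (Matrix.of (Fin.cons x0 (Fin.cons x3 w))) = 0 := by
  classical
  set v : Fin (m+3) → Fin (m+2) → ℂ :=
    Fin.cons x1 (Fin.cons x2 (Fin.cons x3 w)) with hv
  have main : ∑ j : Fin (m+3), (-1)^(j:ℕ)
      * Matrix.det (Matrix.of (Fin.cons x0 (Fin.cons (v j) w)))
      * Matrix.det (Matrix.of fun a b => v (j.succAbove a) b) = 0 := by
    have key : ∀ j : Fin (m+3), (-1:ℂ)^(j:ℕ)
        * Matrix.det (Matrix.of (Fin.cons x0 (Fin.cons (v j) w)))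
        * Matrix.det (Matrix.of fun a b => v (j.succAbove a) b)
      = ∑ c, Matrix.det (Matrix.of (Fin.cons x0 (Fin.cons
          (fun d => if c = d then (1:ℂ) else 0) w)))
          * ((-1)^(j:ℕ) * v j c * Matrix.det (Matrix.of fun a b => v (j.succAbove a) b)) := by
      intro j
      rw [det_expand_row1 w x0 (v j), Finset.mul_sum, Finset.sum_mul]
      refine Finset.sum_congr rfl fun c _ => ?_
      ring
    rw [Finset.sum_congr rfl fun j _ => key j]
    rw [Finset.sum_comm]
    refine Finset.sum_eq_zero fun c _ => ?_
    rw [← Finset.mul_sum, dep v c, mul_zero]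
  rw [Fin.sum_univ_succ, Fin.sum_univ_succ, Fin.sum_univ_succ] at main
  -- identify the three determinants
  have h0 : Matrix.det (Matrix.of fun a b => v ((0 : Fin (m+3)).succAbove a) b)
      = Matrix.det (Matrix.of (Fin.cons x2 (Fin.cons x3 w))) := by
    congr 1
  have h1 : Matrix.det (Matrix.of fun a b => v ((Fin.succ (0 : Fin (m+2))).succAbove a) b)
      = Matrix.det (Matrix.of (Fin.cons x1 (Fin.cons x3 w))) := by
    congr 1
    ext a b
    refine Fin.cases ?_ (fun a' => ?_) a
    · show v ((Fin.succ (0 : Fin (m+2))).succAbove 0) b = _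
      rw [Fin.succAbove_of_castSucc_lt _ _ (by simp [Fin.lt_def])]
      simp [hv]
    · show v ((Fin.succ (0 : Fin (m+2))).succAbove a'.succ) b = _
      rw [Fin.succAbove_of_le_castSucc _ _ (by simp [Fin.le_def])]
      simp [hv]
  have h2 : Matrix.det (Matrix.of fun a b =>
        v ((Fin.succ (Fin.succ (0 : Fin (m+1)))).succAbove a) b)
      = Matrix.det (Matrix.of (Fin.cons x1 (Fin.cons x2 w))) := by
    congr 1
    ext a b
    refine Fin.cases ?_ (fun a' => ?_) a
    · show v ((Fin.succ (Fin.succ (0 : Fin (m+1)))).succAbove 0) b = _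
      rw [Fin.succAbove_of_castSucc_lt _ _ (by simp [Fin.lt_def, Nat.mod_eq_of_lt (show 2 < m + 2 + 1 by omega)] <;> omega)]
      simp [hv]
    · refine Fin.cases ?_ (fun a'' => ?_) a'
      · show v ((Fin.succ (Fin.succ (0 : Fin (m+1)))).succAbove (Fin.succ 0)) b = _
        rw [Fin.succAbove_of_castSucc_lt _ _ (by simp [Fin.lt_def, Nat.mod_eq_of_lt (show 2 < m + 2 + 1 by omega)] <;> omega)]
        rw [← Fin.succ_castSucc, Fin.castSucc_zero]
        simp [hv]
      · show v ((Fin.succ (Fin.succ (0 : Fin (m+1)))).succAbove a''.succ.succ) b = _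
        rw [Fin.succAbove_of_le_castSucc _ _ (by simp [Fin.le_def, Nat.mod_eq_of_lt (show 2 < m + 2 + 1 by omega)] <;> omega)]
        simp [hv]
  have htail : ∀ a : Fin m,
      Matrix.det (Matrix.of (Fin.cons x0 (Fin.cons
        (v (Fin.succ (Fin.succ (Fin.succ a)))) w))) = 0 := by
    intro a
    have hva : v (Fin.succ (Fin.succ (Fin.succ a))) = w a := by simp [hv]
    rw [hva]
    have e1 : (1 : Fin (m+2)) = Fin.succ 0 := by
      ext
      simp
    refine Matrix.det_zero_of_row_eq (i := Fin.succ 0) (j := Fin.succ (Fin.succ a)) ?_ ?_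
    · intro h
      rw [Fin.succ_inj] at h
      exact (Fin.succ_ne_zero a) h.symm
    · funext b
      simp
  simp only [htail, mul_zero, zero_mul, Finset.sum_const_zero, add_zero] at main
  rw [h0, h1, h2] at main
  have hv0 : v 0 = x1 := by rw [hv, Fin.cons_zero]
  have hv1 : v (Fin.succ 0) = x2 := by rw [hv, Fin.cons_succ, Fin.cons_zero]
  have hv2 : v ((Fin.succ (0 : Fin (m+1))).succ) = x3 := by
    rw [hv, Fin.cons_succ, Fin.cons_succ, Fin.cons_zero]
  rw [hv0, hv1, hv2] at main
  simp only [Fin.val_succ, Fin.val_zero, pow_zero, pow_succ, one_mul] at main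
  linear_combination main

-- telescoping
lemma tel (H : ℤ → ℂ) (τ : ℂ) : ∀ (s : ℕ) (x : ℤ),
    ∑ j ∈ Finset.range (s+1), (H (x + j) - τ * H (x + j - 1)) * τ^(s - j)
      = H (x + s) - τ^(s+1) * H (x - 1) := by
  intro s
  induction s with
  | zero =>
    intro x
    simp
  | succ s ih =>
    intro x
    rw [Finset.sum_range_succ]
    have step : ∑ j ∈ Finset.range (s+1), (H (x + j) - τ * H (x + j - 1)) * τ^(s+1 - j)
        = τ * ∑ j ∈ Finset.range (s+1), (H (x + j) - τ * H (x + j - 1)) * τ^(s - j) := by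
      rw [Finset.mul_sum]
      refine Finset.sum_congr rfl fun j hj => ?_
      have hj' : j ≤ s := by
        simp only [Finset.mem_range] at hj
        omega
      rw [show s + 1 - j = (s - j) + 1 by omega, pow_succ]
      ring
    rw [step, ih x]
    rw [Nat.sub_self, pow_zero,
      show x + ((s+1:ℕ):ℤ) - 1 = x + s from by push_cast; ring,
      show x + ((s+1:ℕ):ℤ) = x + s + 1 from by push_cast; ring,
      pow_succ (τ) (s+1)]
    ring

lemma det_U {n : ℕ} (τ : ℂ) :
    (Matrix.of fun j b : Fin n => if (j:ℕ) ≤ (b:ℕ) then τ^((b:ℕ)-(j:ℕ)) else 0).det = 1 := by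
  rw [Matrix.det_of_upperTriangular]
  · rw [Finset.prod_congr rfl (fun j _ => ?_), Finset.prod_const_one]
    simp
  · intro a b hab
    simp only [Matrix.of_apply]
    rw [if_neg]
    exact fun h => absurd (lt_of_le_of_lt (by exact_mod_cast h) (by exact_mod_cast hab))
      (lt_irrefl _)

lemma det_V {n : ℕ} (τ : ℂ) :
    (Matrix.of fun c' c : Fin (n+1) =>
      if c' = c then (1:ℂ) else if c' = 0 then -τ^(c:ℕ) else 0).det = 1 := by
  rw [Matrix.det_of_upperTriangular]
  · rw [Finset.prod_congr rfl (fun j _ => ?_), Finset.prod_const_one]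
    simp
  · intro a b hab
    simp only [Matrix.of_apply]
    rw [if_neg (by exact fun h => absurd h (by exact fun h => (lt_irrefl _ (h ▸ hab)))), if_neg]
    intro h
    subst h
    exact absurd hab (by simp [Fin.lt_def])

lemma detG (M : ℕ) (q : ℂ) (hgen : ∀ n : ℕ, 1 ≤ n → q ^ n ≠ 1)
    (i : Fin M) (t : Fin M → ℂ) {n : ℕ} (ρ : Fin n → ℤ) :
    Matrix.det (Matrix.of (Fin.cons (fun c : Fin (n+1) => (t i)^(c:ℕ))
        (fun a => fun c : Fin (n+1) => hco M q (ρ a - 1 + (c:ℕ)) t)))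
    = Matrix.det (Matrix.of fun a b : Fin n => hco M q (ρ a + (b:ℕ)) (qshift M q i t)) := by
  classical
  set τ := t i with hτ
  set N : Matrix (Fin n) (Fin n) ℂ :=
    Matrix.of (fun a b : Fin n => hco M q (ρ a + (b:ℕ)) t - τ * hco M q (ρ a + (b:ℕ) - 1) t)
    with hN
  set U : Matrix (Fin n) (Fin n) ℂ :=
    Matrix.of (fun j b : Fin n => if (j:ℕ) ≤ (b:ℕ) then τ^((b:ℕ)-(j:ℕ)) else 0) with hU
  set P : Matrix (Fin n) (Fin n) ℂ :=
    Matrix.of (fun a b : Fin n =>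
      hco M q (ρ a + (b:ℕ)) t - τ^((b:ℕ)+1) * hco M q (ρ a - 1) t) with hP
  -- N * U = P
  have hNU : N * U = P := by
    ext a b
    rw [Matrix.mul_apply]
    have hconv : ∀ j : Fin n, N a j * U j b
        = (fun j' : ℕ => (hco M q (ρ a + (j':ℕ)) t - τ * hco M q (ρ a + (j':ℕ) - 1) t)
            * (if j' ≤ (b:ℕ) then τ^((b:ℕ)-j') else 0)) (j:ℕ) := by
      intro j
      simp [hN, hU, mul_ite]
    rw [Finset.sum_congr rfl (fun j _ => hconv j)]
    rw [Fin.sum_univ_eq_sum_range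
      (fun j' : ℕ => (hco M q (ρ a + (j':ℕ)) t - τ * hco M q (ρ a + (j':ℕ) - 1) t)
        * (if j' ≤ (b:ℕ) then τ^((b:ℕ)-j') else 0)) n]
    have hvan : ∀ x ∈ Finset.range n, x ∉ Finset.range ((b:ℕ)+1) →
        (fun j' : ℕ => (hco M q (ρ a + (j':ℕ)) t - τ * hco M q (ρ a + (j':ℕ) - 1) t)
          * (if j' ≤ (b:ℕ) then τ^((b:ℕ)-j') else 0)) x = 0 := by
      intro x _ hx
      simp only [Finset.mem_range] at hx
      simp only []
      rw [if_neg (by omega), mul_zero]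
    rw [← Finset.sum_subset (Finset.range_subset_range.2 (show (b:ℕ)+1 ≤ n from b.2)) hvan]
    have hstep : ∑ j ∈ Finset.range ((b:ℕ)+1),
        (fun j' : ℕ => (hco M q (ρ a + (j':ℕ)) t - τ * hco M q (ρ a + (j':ℕ) - 1) t)
          * (if j' ≤ (b:ℕ) then τ^((b:ℕ)-j') else 0)) j
      = ∑ j ∈ Finset.range ((b:ℕ)+1),
        (hco M q (ρ a + (j:ℕ)) t - τ * hco M q (ρ a + (j:ℕ) - 1) t) * τ^((b:ℕ)-j) := by
      refine Finset.sum_congr rfl fun x hx => ?_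
      simp only [Finset.mem_range] at hx
      simp only []
      rw [if_pos (by omega)]
    rw [hstep, tel (fun y => hco M q y t) τ (b:ℕ) (ρ a)]
    simp [hP]
  have hdetN : N.det = Matrix.det (Matrix.of fun a b : Fin n =>
      hco M q (ρ a + (b:ℕ)) (qshift M q i t)) := by
    congr 1
    ext a b
    simp only [hN, Matrix.of_apply]
    rw [hco_qshift M q hgen i t (ρ a + (b:ℕ)), hτ]
  have hdetP : P.det = N.det := by
    rw [← hNU, Matrix.det_mul, det_U, mul_one]
  -- LHS side
  set M₁ : Matrix (Fin (n+1)) (Fin (n+1)) ℂ :=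
    Matrix.of (Fin.cons (fun c : Fin (n+1) => τ^(c:ℕ))
      (fun a => fun c : Fin (n+1) => hco M q (ρ a - 1 + (c:ℕ)) t)) with hM₁
  set V : Matrix (Fin (n+1)) (Fin (n+1)) ℂ :=
    Matrix.of (fun c' c : Fin (n+1) =>
      if c' = c then (1:ℂ) else if c' = 0 then -τ^(c:ℕ) else 0) with hV
  have hMV : ∀ a c, (M₁ * V) a c
      = M₁ a c + (if c = 0 then 0 else (-τ^(c:ℕ)) * M₁ a 0) := by
    intro a c
    rw [Matrix.mul_apply]
    have hsplit : ∀ c' : Fin (n+1), M₁ a c' * V c' c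
        = (if c' = c then M₁ a c' else 0)
          + (if c' = 0 then (if c = 0 then 0 else (-τ^(c:ℕ)) * M₁ a c') else 0) := by
      intro c'
      rcases eq_or_ne c' c with rfl | h1
      · rcases eq_or_ne c' 0 with rfl | h2
        · simp [hV]
        · simp [hV, h2]
      · rcases eq_or_ne c' 0 with rfl | h2
        · simp only [hV, Matrix.of_apply, if_neg h1, if_pos rfl, if_neg (Ne.symm h1), if_true]
          ring
        · simp [hV, h1, h2]
    rw [Finset.sum_congr rfl (fun c' _ => hsplit c'), Finset.sum_add_distrib,
      Finset.sum_ite_eq' Finset.univ c (fun c' => M₁ a c'),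
      Finset.sum_ite_eq' Finset.univ (0 : Fin (n+1))
        (fun c' => if c = 0 then 0 else (-τ^(c:ℕ)) * M₁ a c')]
    simp only [Finset.mem_univ, if_true]
  clear_value τ
  have hrow0 : ∀ c, (M₁ * V) 0 c = if c = 0 then 1 else 0 := by
    intro c
    rw [hMV 0 c]
    rcases eq_or_ne c 0 with rfl | hc
    · simp [hM₁]
    · rw [if_neg hc, if_neg hc]
      have e0 : M₁ 0 c = τ^(c:ℕ) := by simp [hM₁]
      have e1 : M₁ 0 0 = 1 := by simp [hM₁]
      rw [e0, e1]
      ring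
  have hsub : ((M₁ * V).submatrix Fin.succ Fin.succ) = P := by
    ext a b
    rw [Matrix.submatrix_apply, hMV]
    rw [if_neg (Fin.succ_ne_zero b)]
    have e0 : M₁ (Fin.succ a) (Fin.succ b) = hco M q (ρ a - 1 + ((Fin.succ b : Fin (n+1)):ℕ)) t := by
      simp [hM₁]
    have e1 : M₁ (Fin.succ a) 0 = hco M q (ρ a - 1) t := by
      simp [hM₁]
    rw [e0, e1]
    have : (ρ a - 1 + ((Fin.succ b : Fin (n+1)):ℕ) : ℤ) = ρ a + (b:ℕ) := by
      push_cast [Fin.val_succ]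
      ring
    rw [this]
    simp [hP, Fin.val_succ]
    ring
  have : M₁.det = P.det := by
    have h1 : M₁.det = (M₁ * V).det := by
      rw [Matrix.det_mul, det_V, mul_one]
    rw [h1, det_row0_unit _ hrow0, hsub]
  rw [← hM₁] at *
  rw [this, hdetP, hdetN]


/-- Bäcklund-type bilinear equation for q-Schur functions. -/
theorem stmt6 (M : ℕ) (hM : 1 ≤ M) (q : ℂ)
    (hgen : ∀ n : ℕ, 1 ≤ n → q ^ n ≠ 1)
    {m : ℕ} (lam : Fin m → ℕ) (hlam : Antitone lam) (k l : ℤ) (hkl : k < l)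
    (i : Fin M) (t : Fin M → ℂ) :
    t i * Sgen M q (Fin.cons (l - 1) (Fin.cons k fun a => (lam a : ℤ))) t
        * Sgen M q (fun a => (lam a : ℤ)) (qshift M q i t)
      + Sgen M q (Fin.cons k fun a => (lam a : ℤ)) t
        * Sgen M q (Fin.cons l fun a => (lam a : ℤ)) (qshift M q i t)
      - Sgen M q (Fin.cons l fun a => (lam a : ℤ)) t
        * Sgen M q (Fin.cons k fun a => (lam a : ℤ)) (qshift M q i t) = 0 := by
  classical
  set w : Fin m → Fin (m+2) → ℂ :=
    fun a c => hco M q ((lam a : ℤ) - (a:ℕ) - 2 + (c:ℕ)) t with hw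
  set x0 : Fin (m+2) → ℂ := fun c => if c = 0 then 1 else 0 with hx0
  set xe : Fin (m+2) → ℂ := fun c => t i ^ (c:ℕ) with hxe
  set xl : Fin (m+2) → ℂ := fun c => hco M q (l - 1 + (c:ℕ)) t with hxl
  set xk : Fin (m+2) → ℂ := fun c => hco M q (k - 1 + (c:ℕ)) t with hxk
  have hrow0 : ∀ c : Fin (m+2),
      (Matrix.of (Fin.cons x0 (Fin.cons xe w))) 0 c = if c = 0 then 1 else 0 := by
    intro c
    simp [hx0]
  have hrow0k : ∀ c : Fin (m+2),
      (Matrix.of (Fin.cons x0 (Fin.cons xk w))) 0 c = if c = 0 then 1 else 0 := by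
    intro c
    simp [hx0]
  have hrow0l : ∀ c : Fin (m+2),
      (Matrix.of (Fin.cons x0 (Fin.cons xl w))) 0 c = if c = 0 then 1 else 0 := by
    intro c
    simp [hx0]
  -- E1 : the big determinant
  have E1 : Matrix.det (Matrix.of (Fin.cons xl (Fin.cons xk w)))
      = Sgen M q (Fin.cons (l - 1) (Fin.cons k fun a => (lam a : ℤ))) t := by
    simp only [Sgen]
    congr 1
    ext a b
    refine Fin.cases ?_ (fun a' => ?_) a
    · simp only [Matrix.of_apply, Fin.cons_zero, hxl]
      exact hco_congr M q t (by push_cast [Fin.val_succ, Fin.val_zero]; ring)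
    · refine Fin.cases ?_ (fun a'' => ?_) a'
      · simp only [Matrix.of_apply, Fin.cons_succ, Fin.cons_zero, hxk]
        exact hco_congr M q t (by push_cast [Fin.val_succ, Fin.val_zero]; ring)
      · simp only [Matrix.of_apply, Fin.cons_succ, hw]
        exact hco_congr M q t (by push_cast [Fin.val_succ, Fin.val_zero]; ring)
  -- E3 : S_{(k,lam)}(t)
  have E3 : Matrix.det (Matrix.of (Fin.cons x0 (Fin.cons xk w)))
      = Sgen M q (Fin.cons k fun a => (lam a : ℤ)) t := by
    rw [det_row0_unit _ hrow0k]
    simp only [Sgen]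
    congr 1
    ext a b
    refine Fin.cases ?_ (fun a' => ?_) a
    · simp only [Matrix.submatrix_apply, Matrix.of_apply, Fin.cons_succ, Fin.cons_zero, hxk]
      exact hco_congr M q t (by push_cast [Fin.val_succ, Fin.val_zero]; ring)
    · simp only [Matrix.submatrix_apply, Matrix.of_apply, Fin.cons_succ, hw]
      exact hco_congr M q t (by push_cast [Fin.val_succ, Fin.val_zero]; ring)
  -- E4 : S_{(l,lam)}(t)
  have E4 : Matrix.det (Matrix.of (Fin.cons x0 (Fin.cons xl w)))
      = Sgen M q (Fin.cons l fun a => (lam a : ℤ)) t := by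
    rw [det_row0_unit _ hrow0l]
    simp only [Sgen]
    congr 1
    ext a b
    refine Fin.cases ?_ (fun a' => ?_) a
    · simp only [Matrix.submatrix_apply, Matrix.of_apply, Fin.cons_succ, Fin.cons_zero, hxl]
      exact hco_congr M q t (by push_cast [Fin.val_succ, Fin.val_zero]; ring)
    · simp only [Matrix.submatrix_apply, Matrix.of_apply, Fin.cons_succ, hw]
      exact hco_congr M q t (by push_cast [Fin.val_succ, Fin.val_zero]; ring)
  -- E5 : S_{(l,lam)}(T t)
  have E5 : Matrix.det (Matrix.of (Fin.cons xe (Fin.cons xl w)))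
      = Sgen M q (Fin.cons l fun a => (lam a : ℤ)) (qshift M q i t) := by
    have h1 : Matrix.of (Fin.cons xe (Fin.cons xl w))
        = Matrix.of (Fin.cons (fun c : Fin (m+2) => t i ^ (c:ℕ))
            (fun (a : Fin (m+1)) => fun c : Fin (m+2) => hco M q
              ((Fin.cons l (fun a : Fin m => (lam a : ℤ) - (a:ℕ) - 1) : Fin (m+1) → ℤ) a - 1 + (c:ℕ)) t)) := by
      ext a c
      refine Fin.cases ?_ (fun a' => ?_) a
      · simp [hxe]
      · refine Fin.cases ?_ (fun a'' => ?_) a'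
        · simp only [Matrix.of_apply, Fin.cons_succ, Fin.cons_zero, hxl]
        · simp only [Matrix.of_apply, Fin.cons_succ, hw]
          exact hco_congr M q t (by push_cast [Fin.val_succ, Fin.val_zero]; ring)
    rw [h1, detG M q hgen i t (Fin.cons l (fun a : Fin m => (lam a : ℤ) - (a:ℕ) - 1))]
    simp only [Sgen]
    congr 1
    ext a b
    refine Fin.cases ?_ (fun a' => ?_) a
    · simp only [Matrix.of_apply, Fin.cons_zero]
      exact hco_congr M q _ (by push_cast [Fin.val_succ, Fin.val_zero]; ring)
    · simp only [Matrix.of_apply, Fin.cons_succ]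
      exact hco_congr M q _ (by push_cast [Fin.val_succ, Fin.val_zero]; ring)
  -- E6 : S_{(k,lam)}(T t)
  have E6 : Matrix.det (Matrix.of (Fin.cons xe (Fin.cons xk w)))
      = Sgen M q (Fin.cons k fun a => (lam a : ℤ)) (qshift M q i t) := by
    have h1 : Matrix.of (Fin.cons xe (Fin.cons xk w))
        = Matrix.of (Fin.cons (fun c : Fin (m+2) => t i ^ (c:ℕ))
            (fun (a : Fin (m+1)) => fun c : Fin (m+2) => hco M q
              ((Fin.cons k (fun a : Fin m => (lam a : ℤ) - (a:ℕ) - 1) : Fin (m+1) → ℤ) a - 1 + (c:ℕ)) t)) := by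
      ext a c
      refine Fin.cases ?_ (fun a' => ?_) a
      · simp [hxe]
      · refine Fin.cases ?_ (fun a'' => ?_) a'
        · simp only [Matrix.of_apply, Fin.cons_succ, Fin.cons_zero, hxk]
        · simp only [Matrix.of_apply, Fin.cons_succ, hw]
          exact hco_congr M q t (by push_cast [Fin.val_succ, Fin.val_zero]; ring)
    rw [h1, detG M q hgen i t (Fin.cons k (fun a : Fin m => (lam a : ℤ) - (a:ℕ) - 1))]
    simp only [Sgen]
    congr 1
    ext a b
    refine Fin.cases ?_ (fun a' => ?_) a
    · simp only [Matrix.of_apply, Fin.cons_zero]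
      exact hco_congr M q _ (by push_cast [Fin.val_succ, Fin.val_zero]; ring)
    · simp only [Matrix.of_apply, Fin.cons_succ]
      exact hco_congr M q _ (by push_cast [Fin.val_succ, Fin.val_zero]; ring)
  -- E2 : t i * S_lam(T t)
  have E2 : Matrix.det (Matrix.of (Fin.cons x0 (Fin.cons xe w)))
      = t i * Sgen M q (fun a => (lam a : ℤ)) (qshift M q i t) := by
    rw [det_row0_unit _ hrow0]
    have hsub : (Matrix.of (Fin.cons x0 (Fin.cons xe w))).submatrix Fin.succ Fin.succ
        = Matrix.updateRow (Matrix.of (Fin.cons (fun b : Fin (m+1) => t i ^ (b:ℕ))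
            (fun a b => w a b.succ))) 0 (t i • fun b : Fin (m+1) => t i ^ (b:ℕ)) := by
      ext a b
      refine Fin.cases ?_ (fun a' => ?_) a
      · rw [Matrix.submatrix_apply, Matrix.updateRow_self]
        simp only [Matrix.of_apply, Fin.cons_succ, Fin.cons_zero, hxe, Pi.smul_apply,
          smul_eq_mul, Fin.val_succ, pow_succ]
        ring
      · rw [Matrix.submatrix_apply, Matrix.updateRow_ne (Fin.succ_ne_zero a')]
        simp
    rw [hsub, Matrix.det_updateRow_smul]
    congr 1
    have hupd : (Matrix.of (Fin.cons (fun b : Fin (m+1) => t i ^ (b:ℕ))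
          (fun a b => w a b.succ))).updateRow 0 (fun b : Fin (m+1) => t i ^ (b:ℕ))
        = Matrix.of (Fin.cons (fun b : Fin (m+1) => t i ^ (b:ℕ)) (fun a b => w a b.succ)) := by
      ext a b
      refine Fin.cases ?_ (fun a' => ?_) a
      · rw [Matrix.updateRow_self]
        simp
      · rw [Matrix.updateRow_ne (Fin.succ_ne_zero a')]
    rw [hupd]
    have h1 : Matrix.of (Fin.cons (fun b : Fin (m+1) => t i ^ (b:ℕ))
          (fun a b => w a b.succ))
        = Matrix.of (Fin.cons (fun c : Fin (m+1) => t i ^ (c:ℕ))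
            (fun a => fun c : Fin (m+1) => hco M q
              ((fun a : Fin m => (lam a : ℤ) - (a:ℕ)) a - 1 + (c:ℕ)) t)) := by
      ext a c
      refine Fin.cases ?_ (fun a' => ?_) a
      · simp
      · simp only [Matrix.of_apply, Fin.cons_succ, hw]
        exact hco_congr M q t (by push_cast [Fin.val_succ, Fin.val_zero]; ring)
    rw [h1, detG M q hgen i t (fun a : Fin m => (lam a : ℤ) - (a:ℕ))]
    simp only [Sgen]
  have P := pluecker w x0 xe xl xk
  rw [E1, E2, E3, E4, E5, E6] at P
  linear_combination P
end
end

section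
/- If u_{i,j} = T_i(τ_j)τ_{j−1}/(T_i(τ_{j−1})τ_j) where the τ_j satisfy the Hirota–Miwa bilinear equations t_i T_i(τ_{k−1})T_j(τ_k) − t_j T_j(τ_{k−1})T_i(τ_k) = (t_i−t_j) T_iT_j(τ_{k−1}) τ_k, then the u_{i,j} satisfy the q-KP evolution equation T_k(u_{i,j}) = u_{i,j}·(t_i u_{k,j+1} − t_k u_{i,j+1})/(t_i u_{k,j} − t_k u_{i,j}) for i ≠ k. -/
open scoped BigOperators

noncomputable section

/-- u_{i,j} = T_i(τ_j) τ_{j-1} / (T_i(τ_{j-1}) τ_j). -/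
def uKP (M : ℕ) (q : ℂ) (τ : ℤ → (Fin M → ℂ) → ℂ) (i : Fin M) (j : ℤ)
    (t : Fin M → ℂ) : ℂ :=
  τ j (qshift M q i t) * τ (j - 1) t / (τ (j - 1) (qshift M q i t) * τ j t)


private lemma keyKP (A B a1 a2 a3 p1 p2 p3 r1 r2 r3 c1 c2 : ℂ)
    (ha1 : a1 ≠ 0) (ha2 : a2 ≠ 0) (ha3 : a3 ≠ 0)
    (hp1 : p1 ≠ 0) (hp2 : p2 ≠ 0) (hr1 : r1 ≠ 0) (hr2 : r2 ≠ 0)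
    (hc1 : c1 ≠ 0)
    (h1 : A * p1 * r2 - B * r1 * p2 = (A - B) * c1 * a2)
    (h2 : A * p2 * r3 - B * r2 * p3 = (A - B) * c2 * a3)
    (hden : A * (r2 * a1 / (r1 * a2)) - B * (p2 * a1 / (p1 * a2)) ≠ 0) :
    c2 * r1 / (c1 * r2)
      = p2 * a1 / (p1 * a2)
          * (A * (r3 * a2 / (r2 * a3)) - B * (p3 * a2 / (p2 * a3)))
          / (A * (r2 * a1 / (r1 * a2)) - B * (p2 * a1 / (p1 * a2))) := by
  have e1 : A * (r2 * a1 / (r1 * a2)) - B * (p2 * a1 / (p1 * a2))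
      = a1 * (A - B) * c1 / (r1 * p1) := by
    field_simp
    linear_combination h1
  have e2 : A * (r3 * a2 / (r2 * a3)) - B * (p3 * a2 / (p2 * a3))
      = a2 * (A - B) * c2 / (r2 * p2) := by
    field_simp
    linear_combination h2
  have hAB : A - B ≠ 0 := by
    intro h
    apply hden
    rw [e1, h]
    simp
  rw [e1, e2]
  field_simp

/-- The Hirota–Miwa equations for τ imply the q-KP evolution equation for u. -/
theorem stmt13 (M : ℕ) (q : ℂ) (τ : ℤ → (Fin M → ℂ) → ℂ)
    (hτ : ∀ j t, τ j t ≠ 0)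
    (HM : ∀ i j : Fin M, i ≠ j → ∀ k : ℤ, ∀ t : Fin M → ℂ,
      t i * τ (k - 1) (qshift M q i t) * τ k (qshift M q j t)
        - t j * τ (k - 1) (qshift M q j t) * τ k (qshift M q i t)
        = (t i - t j) * τ (k - 1) (qshift M q i (qshift M q j t)) * τ k t)
    (i k : Fin M) (hik : i ≠ k) (j : ℤ) (t : Fin M → ℂ)
    (hden : t i * uKP M q τ k j t - t k * uKP M q τ i j t ≠ 0) :
    uKP M q τ i j (qshift M q k t)
      = uKP M q τ i j t
          * (t i * uKP M q τ k (j + 1) t - t k * uKP M q τ i (j + 1) t)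
          / (t i * uKP M q τ k j t - t k * uKP M q τ i j t) := by
  have h1 := HM i k hik j t
  have h2 := HM i k hik (j + 1) t
  simp only [add_sub_cancel_right] at h2
  have hd : t i * uKP M q τ k j t - t k * uKP M q τ i j t
      = t i * (τ j (qshift M q k t) * τ (j - 1) t / (τ (j - 1) (qshift M q k t) * τ j t))
        - t k * (τ j (qshift M q i t) * τ (j - 1) t / (τ (j - 1) (qshift M q i t) * τ j t)) := rfl
  rw [hd] at hden
  simp only [uKP, add_sub_cancel_right]
  exact keyKP (t i) (t k) (τ (j - 1) t) (τ j t) (τ (j + 1) t)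
    (τ (j - 1) (qshift M q i t)) (τ j (qshift M q i t)) (τ (j + 1) (qshift M q i t))
    (τ (j - 1) (qshift M q k t)) (τ j (qshift M q k t)) (τ (j + 1) (qshift M q k t))
    (τ (j - 1) (qshift M q i (qshift M q k t))) (τ j (qshift M q i (qshift M q k t)))
    (hτ _ _) (hτ _ _) (hτ _ _) (hτ _ _) (hτ _ _) (hτ _ _) (hτ _ _) (hτ _ _)
    h1 h2 hden
end
end

section
/- Braid relations for the birational Weyl group action: the automorphisms s_j (j ∈ ℤ/Nℤ) of the field ℂ(x_{i,j}) defined by s_j(x_{i,j}) = q x_{i,j+1} Q_{i−1,j}/Q_{i,j}, s_j(x_{i,j+1}) = q^{−1} x_{i,j} Q_{i,j}/Q_{i−1,j}, s_j(x_{i,k}) = x_{i,k} for k ≠ j, j+1, satisfy s_j² = id for each j (in the case N ≥ 3, M ≥ 2, with generic parameters). -/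
open scoped BigOperators

noncomputable section

/-- Q_{i,j} = Σ_{a=1}^{M} (∏_{k=1}^{a-1} x_{i+k,j}) (∏_{k=a+1}^{M} x_{i+k,j+1}). -/
def Qpoly (M : ℕ) (x : ℤ → ℤ → ℂ) (i j : ℤ) : ℂ :=
  ∑ a ∈ Finset.Icc 1 M,
    (∏ k ∈ Finset.Icc 1 (a - 1), x (i + (k : ℤ)) j)
      * ∏ k ∈ Finset.Icc (a + 1) M, x (i + (k : ℤ)) (j + 1)

/-- The birational action of the generator s_{j0} on the variables x_{i,j}
(indices j taken mod N): s_{j0}(x_{i,j0}) = q x_{i,j0+1} Q_{i-1,j0} / Q_{i,j0},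
s_{j0}(x_{i,j0+1}) = q⁻¹ x_{i,j0} Q_{i,j0} / Q_{i-1,j0}, fixing other variables. -/
def sWeyl (M N : ℕ) (q : ℂ) (j0 : ℤ) (x : ℤ → ℤ → ℂ) : ℤ → ℤ → ℂ :=
  fun i j =>
    if (j - j0) % (N : ℤ) = 0 then
      q * x i (j + 1) * Qpoly M x (i - 1) j / Qpoly M x i j
    else if (j - j0 - 1) % (N : ℤ) = 0 then
      q⁻¹ * x i (j - 1) * Qpoly M x i (j - 1) / Qpoly M x (i - 1) (j - 1)
    else x i j

namespace S15

def PP (w : ℤ → ℂ) (i : ℤ) (s t : ℕ) : ℂ := ∏ k ∈ Finset.Ioc s t, w (i + (k : ℤ))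

lemma PP_empty (w : ℤ → ℂ) (i : ℤ) (s : ℕ) : PP w i s s = 1 := by simp [PP]

lemma PP_split (w : ℤ → ℂ) (i : ℤ) {s m t : ℕ} (h1 : s ≤ m) (h2 : m ≤ t) :
    PP w i s m * PP w i m t = PP w i s t :=
  Finset.prod_Ioc_consecutive _ h1 h2

lemma PP_succ_top (w : ℤ → ℂ) (i : ℤ) {s t : ℕ} (h : s ≤ t) :
    PP w i s (t + 1) = PP w i s t * w (i + ((t : ℤ) + 1)) := by
  unfold PP
  rw [Finset.prod_Ioc_succ_top h]
  push_cast
  ring_nf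

lemma PP_single (w : ℤ → ℂ) (i : ℤ) (s : ℕ) : PP w i s (s + 1) = w (i + ((s : ℤ) + 1)) := by
  rw [PP_succ_top w i le_rfl, PP_empty, one_mul]

lemma PP_base (w : ℤ → ℂ) (i : ℤ) (m s t : ℕ) :
    PP w (i + (m : ℤ)) s t = PP w i (m + s) (m + t) := by
  unfold PP
  rw [← Finset.map_add_left_Ioc, Finset.prod_map]
  refine Finset.prod_congr rfl fun k _ => ?_
  simp only [addLeftEmbedding_apply]
  push_cast
  ring_nf

lemma PP_shift {M : ℕ} {q : ℂ} {w : ℤ → ℂ} (hw : ∀ l : ℤ, w (l + (M : ℤ)) = q * w l)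
    (i : ℤ) (s t : ℕ) :
    PP w i (M + s) (M + t) = q ^ (t - s) * PP w i s t := by
  unfold PP
  rw [← Finset.map_add_left_Ioc, Finset.prod_map]
  have hcong : ∀ k ∈ Finset.Ioc s t,
      w (i + ((addLeftEmbedding M k : ℕ) : ℤ)) = q * w (i + (k : ℤ)) := by
    intro k _
    simp only [addLeftEmbedding_apply]
    rw [← hw (i + (k : ℤ))]
    congr 1
    push_cast
    ring
  rw [Finset.prod_congr rfl hcong, Finset.prod_mul_distrib, Finset.prod_const, Nat.card_Ioc]

def QQ (M : ℕ) (u v : ℤ → ℂ) (i : ℤ) : ℂ :=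
  ∑ b ∈ Finset.range M, PP u i 0 b * PP v i (b + 1) M

def Tm (M : ℕ) (u v : ℤ → ℂ) (i : ℤ) (m b : ℕ) : ℂ :=
  PP u i m (m + b) * PP v i (m + b + 1) (M + m)

def Cc (M : ℕ) (u v : ℤ → ℂ) (i : ℤ) (m : ℕ) : ℂ :=
  ∑ b ∈ Finset.range (M - m), Tm M u v i m b

def Bm (M : ℕ) (u v : ℤ → ℂ) (i : ℤ) (n : ℕ) : ℂ := PP v i 0 n * PP u i (n + 1) M

def Sb (M : ℕ) (u v : ℤ → ℂ) (i : ℤ) (n b : ℕ) : ℂ :=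
  PP u i (n + 1) (n + 1 + b) * PP v i (n + 2 + b) (M + n)

variable {M : ℕ} {q : ℂ} {u v : ℤ → ℂ}

lemma QQ_off (M : ℕ) (u v : ℤ → ℂ) (i : ℤ) (m : ℕ) :
    QQ M u v (i + (m : ℤ)) = ∑ b ∈ Finset.range M, Tm M u v i m b := by
  unfold QQ Tm
  refine Finset.sum_congr rfl fun b _ => ?_
  rw [PP_base, PP_base]
  have e1 : m + 0 = m := by omega
  have e2 : m + (b + 1) = m + b + 1 := by omega
  have e3 : m + M = M + m := by omega
  rw [e1, e2, e3]

lemma Cc_zero (M : ℕ) (u v : ℤ → ℂ) (i : ℤ) : Cc M u v i 0 = QQ M u v i := by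
  have h := QQ_off M u v i 0
  simp only [Nat.cast_zero, add_zero] at h
  rw [Cc, Nat.sub_zero, ← h]

lemma Cc_top (M : ℕ) (u v : ℤ → ℂ) (i : ℤ) : Cc M u v i M = 0 := by simp [Cc]

/-- `Tm n (b+1) = u(i+n+1) * Sb n b` -/
lemma Tm_succ (M : ℕ) (u v : ℤ → ℂ) (i : ℤ) (n b : ℕ) :
    Tm M u v i n (b + 1) = u (i + ((n : ℤ) + 1)) * Sb M u v i n b := by
  unfold Tm Sb
  have e1 : n + (b + 1) = n + 1 + b := by omega
  rw [e1]
  have e2 : n + 1 + b + 1 = n + 2 + b := by omega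
  rw [e2]
  have hsp : PP u i n (n + 1) * PP u i (n + 1) (n + 1 + b) = PP u i n (n + 1 + b) :=
    PP_split u i (by omega) (by omega)
  rw [← hsp, PP_single]
  ring

/-- `Tm (n+1) b = q * v(i+n+1) * Sb n b` (uses quasi-periodicity of `v`). -/
lemma Tm_shift (hv : ∀ l : ℤ, v (l + (M : ℤ)) = q * v l) (i : ℤ) (n b : ℕ)
    (hb : n + 2 + b ≤ M + n) :
    Tm M u v i (n + 1) b = q * v (i + ((n : ℤ) + 1)) * Sb M u v i n b := by
  unfold Tm Sb
  have e1 : n + 1 + b + 1 = n + 2 + b := by omega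
  have e2 : M + (n + 1) = (M + n) + 1 := by omega
  rw [e1, e2, PP_succ_top v i hb]
  have hv' : v (i + (((M + n : ℕ) : ℤ) + 1)) = q * v (i + ((n : ℤ) + 1)) := by
    rw [← hv (i + ((n : ℤ) + 1))]
    congr 1
    push_cast
    ring
  rw [hv']
  ring

/-- the basic recurrence (R1). -/
lemma R1 (hv : ∀ l : ℤ, v (l + (M : ℤ)) = q * v l) (i : ℤ) (n : ℕ) :
    u (i + ((n : ℤ) + 1)) * QQ M u v (i + ((n : ℤ) + 1)) + PP v i (n + 1) (M + (n + 1))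
      = q * v (i + ((n : ℤ) + 1)) * QQ M u v (i + (n : ℤ)) + PP u i n (M + n) := by
  set H : ℕ → ℂ := fun b => PP u i n (n + b) * PP v i (n + b + 1) (M + (n + 1)) with hH
  have hA : ∀ b, u (i + ((n : ℤ) + 1)) * Tm M u v i (n + 1) b = H (b + 1) := by
    intro b
    unfold Tm
    simp only [hH]
    have e1 : n + (b + 1) = n + 1 + b := by omega
    rw [e1]
    have hsp : PP u i n (n + 1) * PP u i (n + 1) (n + 1 + b) = PP u i n (n + 1 + b) :=
      PP_split u i (by omega) (by omega)
    rw [← hsp, PP_single]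
    ring
  have hB : ∀ b, b < M → q * v (i + ((n : ℤ) + 1)) * Tm M u v i n b = H b := by
    intro b hbM
    unfold Tm
    simp only [hH]
    have e2 : M + (n + 1) = (M + n) + 1 := by omega
    rw [e2, PP_succ_top v i (by omega)]
    have hv' : v (i + (((M + n : ℕ) : ℤ) + 1)) = q * v (i + ((n : ℤ) + 1)) := by
      rw [← hv (i + ((n : ℤ) + 1))]
      congr 1
      push_cast
      ring
    rw [hv']
    ring
  have hq1 : QQ M u v (i + ((n : ℤ) + 1)) = ∑ b ∈ Finset.range M, Tm M u v i (n + 1) b := by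
    have := QQ_off M u v i (n + 1)
    push_cast at this
    rw [← this]
  have hq0 : QQ M u v (i + (n : ℤ)) = ∑ b ∈ Finset.range M, Tm M u v i n b :=
    QQ_off M u v i n
  have hsum1 : u (i + ((n : ℤ) + 1)) * QQ M u v (i + ((n : ℤ) + 1))
      = ∑ b ∈ Finset.range M, H (b + 1) := by
    rw [hq1, Finset.mul_sum]
    exact Finset.sum_congr rfl fun b _ => hA b
  have hsum0 : q * v (i + ((n : ℤ) + 1)) * QQ M u v (i + (n : ℤ))
      = ∑ b ∈ Finset.range M, H b := by
    rw [hq0, Finset.mul_sum]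
    exact Finset.sum_congr rfl fun b hb => hB b (Finset.mem_range.mp hb)
  have hH0 : H 0 = PP v i (n + 1) (M + (n + 1)) := by
    simp only [hH]
    have e1 : n + 0 = n := by omega
    have e2 : n + 0 + 1 = n + 1 := by omega
    rw [e1, e2, PP_empty, one_mul]
  have hHM : H M = PP u i n (M + n) := by
    simp only [hH]
    have e1 : n + M = M + n := by omega
    rw [e1]
    have e2 : M + n + 1 = M + (n + 1) := by omega
    rw [e2, PP_empty, mul_one]
  have key : ∑ b ∈ Finset.range M, H (b + 1) + H 0 = ∑ b ∈ Finset.range M, H b + H M := by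
    rw [← Finset.sum_range_succ' H M, Finset.sum_range_succ H M]
  rw [hsum1, hsum0, ← hH0, ← hHM]
  exact key

/-- identity (a) -/
lemma key4 (hu : ∀ l : ℤ, u (l + (M : ℤ)) = q * u l)
    (hv : ∀ l : ℤ, v (l + (M : ℤ)) = q * v l) (i : ℤ) (n b : ℕ)
    (hb : n + 2 + b ≤ M) :
    Sb M u v i n b * PP u i n (M + n) = q ^ (2 * n) * Bm M u v i n * Tm M u v i 0 (n + 1 + b) := by
  unfold Sb Bm Tm
  -- expand LHS pieces
  have h1 : PP u i n (M + n) = PP u i n M * (q ^ n * PP u i 0 n) := by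
    rw [← PP_split u i (show n ≤ M by omega) (show M ≤ M + n by omega)]
    congr 1
    have := PP_shift hu i 0 n
    simpa using this
  have h2 : PP v i (n + 2 + b) (M + n)
      = PP v i (n + 2 + b) M * (q ^ n * PP v i 0 n) := by
    rw [← PP_split v i (show n + 2 + b ≤ M by omega) (show M ≤ M + n by omega)]
    congr 1
    have := PP_shift hv i 0 n
    simpa using this
  -- expand RHS pieces
  have e1 : 0 + (n + 1 + b) = n + 1 + b := by omega
  have e3 : M + 0 = M := by omega
  rw [e1, e3]
  have e2 : n + 1 + b + 1 = n + 2 + b := by omega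
  rw [e2, h1, h2]
  have h3 : PP u i 0 (n + 1 + b) = PP u i 0 n * (PP u i n (n + 1) * PP u i (n + 1) (n + 1 + b)) := by
    rw [PP_split u i (show n ≤ n + 1 by omega) (show n + 1 ≤ n + 1 + b by omega),
        PP_split u i (show 0 ≤ n by omega) (show n ≤ n + 1 + b by omega)]
  have h4 : PP u i n M = PP u i n (n + 1) * PP u i (n + 1) M :=
    (PP_split u i (show n ≤ n + 1 by omega) (show n + 1 ≤ M by omega)).symm
  rw [h3, h4]
  have hqq : q ^ (2 * n) = q ^ n * q ^ n := by rw [two_mul, pow_add]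
  rw [hqq]
  ring

/-- identity (c) -/
lemma key5 (hu : ∀ l : ℤ, u (l + (M : ℤ)) = q * u l)
    (hv : ∀ l : ℤ, v (l + (M : ℤ)) = q * v l) (i : ℤ) (n c : ℕ)
    (hc : c ≤ n) (hn : n + 1 ≤ M) :
    q ^ (2 * n) * Bm M u v i n * Tm M u v i 0 c
      = PP v i (n + 1) (M + n) * (PP u i (n + 1) (M + c) * PP v i (M + c + 1) (M + (n + 1))) := by
  unfold Bm Tm
  have h1 : PP u i (n + 1) (M + c) = PP u i (n + 1) M * (q ^ c * PP u i 0 c) := by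
    rw [← PP_split u i (show n + 1 ≤ M by omega) (show M ≤ M + c by omega)]
    congr 1
    have := PP_shift hu i 0 c
    simpa using this
  have h2 : PP v i (M + c + 1) (M + (n + 1)) = q ^ (n - c) * PP v i (c + 1) (n + 1) := by
    have e : M + c + 1 = M + (c + 1) := by omega
    rw [e]
    have := PP_shift hv i (c + 1) (n + 1)
    rw [this]
    congr 2
    omega
  have h3 : PP v i (n + 1) (M + n) = PP v i (n + 1) M * (q ^ n * PP v i 0 n) := by
    rw [← PP_split v i (show n + 1 ≤ M by omega) (show M ≤ M + n by omega)]
    congr 1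
    have := PP_shift hv i 0 n
    simpa using this
  have h4 : PP v i (c + 1) (n + 1) * PP v i (n + 1) M = PP v i (c + 1) M :=
    PP_split v i (by omega) (by omega)
  have e1 : 0 + c = c := by omega
  have e3 : M + 0 = M := by omega
  rw [e1, e3, h1, h2, h3, ← h4]
  have hqq : q ^ (2 * n) = q ^ c * (q ^ (n - c) * q ^ n) := by
    rw [← pow_add, ← pow_add]
    congr 1
    omega
  rw [hqq]
  ring

/-- The master telescoping identity. -/
lemma keyT (hu : ∀ l : ℤ, u (l + (M : ℤ)) = q * u l)
    (hv : ∀ l : ℤ, v (l + (M : ℤ)) = q * v l) (i : ℤ) (n : ℕ) (hn : n < M) :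
    Cc M u v i n * QQ M u v (i + ((n : ℤ) + 1))
      = q ^ (2 * n) * Bm M u v i n * QQ M u v i
        + Cc M u v i (n + 1) * QQ M u v (i + (n : ℤ)) := by
  set QQ1 := QQ M u v (i + ((n : ℤ) + 1)) with hQQ1
  set QQ0 := QQ M u v (i + (n : ℤ)) with hQQ0
  set A := ∑ b ∈ Finset.range (M - (n + 1)), Sb M u v i n b with hA
  set Dm := PP v i (n + 1) (M + n) with hDm
  set U1 := u (i + ((n : ℤ) + 1)) with hU1
  set V1 := v (i + ((n : ℤ) + 1)) with hV1
  set Pu := PP u i n (M + n) with hPu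
  set Pv := PP v i (n + 1) (M + (n + 1)) with hPv
  set S1 := ∑ b ∈ Finset.range (M - (n + 1)), Tm M u v i 0 (n + 1 + b) with hS1
  set S2 := ∑ c ∈ Finset.range (n + 1), Tm M u v i (n + 1) (M - (n + 1) + c) with hS2
  set S3 := ∑ c ∈ Finset.range (n + 1), Tm M u v i 0 c with hS3
  -- h1 : Cc n = Dm + U1 * A
  have h1 : Cc M u v i n = Dm + U1 * A := by
    have hM : M - n = (M - (n + 1)) + 1 := by omega
    rw [Cc, hM, Finset.sum_range_succ']
    have hT0 : Tm M u v i n 0 = Dm := by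
      unfold Tm
      have e1 : n + 0 = n := by omega
      rw [e1]
      have e2 : n + 1 = n + 0 + 1 := by omega
      rw [← e2, PP_empty, one_mul]
    rw [hT0, hA, Finset.mul_sum]
    rw [Finset.sum_congr rfl fun b _ => Tm_succ M u v i n b]
    ring
  -- h2 : Cc (n+1) = q * V1 * A
  have h2 : Cc M u v i (n + 1) = q * V1 * A := by
    rw [Cc, hA, Finset.mul_sum]
    refine Finset.sum_congr rfl fun b hb => ?_
    have hbM : b < M - (n + 1) := Finset.mem_range.mp hb
    exact Tm_shift hv i n b (by omega)
  -- h3 : R1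
  have h3 : U1 * QQ1 + Pv = q * V1 * QQ0 + Pu := R1 hv i n
  -- h4 : A * Pu = q^(2n) * Bm * S1
  have h4 : A * Pu = q ^ (2 * n) * Bm M u v i n * S1 := by
    rw [hA, hS1, Finset.sum_mul, Finset.mul_sum]
    refine Finset.sum_congr rfl fun b hb => ?_
    have hbM : b < M - (n + 1) := Finset.mem_range.mp hb
    exact key4 hu hv i n b (by omega)
  -- h5 : Pv = Dm * (q * V1)
  have h5 : Pv = Dm * (q * V1) := by
    rw [hPv, hDm]
    have e2 : M + (n + 1) = (M + n) + 1 := by omega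
    rw [e2, PP_succ_top v i (by omega)]
    have hv' : v (i + (((M + n : ℕ) : ℤ) + 1)) = q * v (i + ((n : ℤ) + 1)) := by
      rw [← hv (i + ((n : ℤ) + 1))]
      congr 1
      push_cast
      ring
    rw [hv', hV1]
  -- h6 : QQ1 = Cc (n+1) + S2
  have h6 : QQ1 = Cc M u v i (n + 1) + S2 := by
    have hoff := QQ_off M u v i (n + 1)
    push_cast at hoff
    have hadd := Finset.sum_range_add (fun b => Tm M u v i (n + 1) b) (M - (n + 1)) (n + 1)
    have hMe : M - (n + 1) + (n + 1) = M := by omega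
    rw [hMe] at hadd
    rw [hQQ1, hoff, hadd, Cc, hS2]
  -- h7 : Dm * S2 = q^(2n) * Bm * S3
  have h7 : Dm * S2 = q ^ (2 * n) * Bm M u v i n * S3 := by
    rw [hS2, hS3, Finset.mul_sum, Finset.mul_sum]
    refine Finset.sum_congr rfl fun c hc => ?_
    have hcn : c < n + 1 := Finset.mem_range.mp hc
    have hTm : Tm M u v i (n + 1) (M - (n + 1) + c)
        = PP u i (n + 1) (M + c) * PP v i (M + c + 1) (M + (n + 1)) := by
      unfold Tm
      have e1 : n + 1 + (M - (n + 1) + c) = M + c := by omega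
      rw [e1]
    rw [hTm, ← key5 hu hv i n c (by omega) (by omega)]
  -- h8 : QQ i = S3 + S1
  have h8 : QQ M u v i = S3 + S1 := by
    have hoff := QQ_off M u v i 0
    simp only [Nat.cast_zero, add_zero] at hoff
    have hadd := Finset.sum_range_add (fun b => Tm M u v i 0 b) (n + 1) (M - (n + 1))
    have hMe : n + 1 + (M - (n + 1)) = M := by omega
    rw [hMe] at hadd
    rw [hoff, hadd, hS3, hS1]
  linear_combination QQ1 * h1 + A * h3 + h4 - A * h5 + Dm * h6 + h7
    - (q ^ (2 * n) * Bm M u v i n) * h8 + (Dm - QQ0) * h2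

/-- quasi-periodicity of `QQ` in `i`. -/
lemma QQ_per (hu : ∀ l : ℤ, u (l + (M : ℤ)) = q * u l)
    (hv : ∀ l : ℤ, v (l + (M : ℤ)) = q * v l) (i : ℤ) :
    QQ M u v (i + (M : ℤ)) = q ^ (M - 1) * QQ M u v i := by
  rw [QQ_off M u v i M, QQ, Finset.mul_sum]
  refine Finset.sum_congr rfl fun b hb => ?_
  have hbM : b < M := Finset.mem_range.mp hb
  unfold Tm
  have h1 : PP u i M (M + b) = q ^ b * PP u i 0 b := by
    have := PP_shift hu i 0 b
    simpa using this
  have h2 : PP v i (M + b + 1) (M + M) = q ^ (M - (b + 1)) * PP v i (b + 1) M := by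
    have e : M + b + 1 = M + (b + 1) := by omega
    rw [e]
    exact PP_shift hv i (b + 1) M
  rw [h1, h2]
  have hqq : q ^ b * q ^ (M - (b + 1)) = q ^ (M - 1) := by
    rw [← pow_add]
    congr 1
    omega
  calc q ^ b * PP u i 0 b * (q ^ (M - (b + 1)) * PP v i (b + 1) M)
      = (q ^ b * q ^ (M - (b + 1))) * (PP u i 0 b * PP v i (b + 1) M) := by ring
    _ = q ^ (M - 1) * (PP u i 0 b * PP v i (b + 1) M) := by rw [hqq]

lemma tel1 (hf : ∀ l : ℤ, QQ M u v l ≠ 0) (i : ℤ) (s : ℕ) :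
    ∀ t : ℕ, s ≤ t →
      PP (fun l => q * v l * QQ M u v (l - 1) / QQ M u v l) i s t
        = q ^ (t - s) * PP v i s t * (QQ M u v (i + (s : ℤ)) / QQ M u v (i + (t : ℤ))) := by
  refine Nat.le_induction ?_ ?_
  · rw [PP_empty, PP_empty, Nat.sub_self, pow_zero, div_self (hf _)]
    ring
  · intro t hst ih
    rw [PP_succ_top _ i hst, PP_succ_top v i hst, ih]
    have he : i + ((t : ℤ) + 1) - 1 = i + (t : ℤ) := by ring
    have hc : ((t + 1 : ℕ) : ℤ) = (t : ℤ) + 1 := by push_cast; ring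
    rw [he, hc]
    have hp : q ^ (t + 1 - s) = q ^ (t - s) * q := by
      rw [← pow_succ]
      congr 1
      omega
    rw [hp]
    simp only [div_eq_mul_inv, mul_inv]
    linear_combination (q ^ (t - s) * PP v i s t * QQ M u v (i + (s : ℤ)) * q *
      v (i + ((t : ℤ) + 1)) * (QQ M u v (i + ((t : ℤ) + 1)))⁻¹) *
      (mul_inv_cancel₀ (hf (i + (t : ℤ))))

lemma tel2 (hf : ∀ l : ℤ, QQ M u v l ≠ 0) (i : ℤ) (s : ℕ) :
    ∀ t : ℕ, s ≤ t →
      PP (fun l => q⁻¹ * u l * QQ M u v l / QQ M u v (l - 1)) i s t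
        = (q ^ (t - s))⁻¹ * PP u i s t * (QQ M u v (i + (t : ℤ)) / QQ M u v (i + (s : ℤ))) := by
  refine Nat.le_induction ?_ ?_
  · rw [PP_empty, PP_empty, Nat.sub_self, pow_zero, div_self (hf _)]
    ring
  · intro t hst ih
    rw [PP_succ_top _ i hst, PP_succ_top u i hst, ih]
    have he : i + ((t : ℤ) + 1) - 1 = i + (t : ℤ) := by ring
    have hc : ((t + 1 : ℕ) : ℤ) = (t : ℤ) + 1 := by push_cast; ring
    rw [he, hc]
    have hp : q ^ (t + 1 - s) = q ^ (t - s) * q := by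
      rw [← pow_succ]
      congr 1
      omega
    rw [hp, mul_inv]
    simp only [div_eq_mul_inv, mul_inv]
    linear_combination ((q ^ (t - s))⁻¹ * PP u i s t * (QQ M u v (i + (s : ℤ)))⁻¹ * q⁻¹ *
      u (i + ((t : ℤ) + 1)) * QQ M u v (i + ((t : ℤ) + 1))) *
      (mul_inv_cancel₀ (hf (i + (t : ℤ))))

/-- The key involution property : `QQ` of the transformed variables equals `QQ`. -/
theorem QQ_invol (hq : q ≠ 0) (hu : ∀ l : ℤ, u (l + (M : ℤ)) = q * u l)
    (hv : ∀ l : ℤ, v (l + (M : ℤ)) = q * v l)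
    (hf : ∀ l : ℤ, QQ M u v l ≠ 0) (i : ℤ) :
    QQ M (fun l => q * v l * QQ M u v (l - 1) / QQ M u v l)
      (fun l => q⁻¹ * u l * QQ M u v l / QQ M u v (l - 1)) i = QQ M u v i := by
  have hterm : ∀ b ∈ Finset.range M,
      PP (fun l => q * v l * QQ M u v (l - 1) / QQ M u v l) i 0 b
        * PP (fun l => q⁻¹ * u l * QQ M u v l / QQ M u v (l - 1)) i (b + 1) M
      = QQ M u v i * (Cc M u v i b / QQ M u v (i + (b : ℤ))
          - Cc M u v i (b + 1) / QQ M u v (i + ((b : ℤ) + 1))) := by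
    intro b hb
    have hbM : b < M := Finset.mem_range.mp hb
    rw [tel1 hf i 0 b (by omega), tel2 hf i (b + 1) M (by omega)]
    have hc1 : ((b + 1 : ℕ) : ℤ) = (b : ℤ) + 1 := by push_cast; ring
    rw [hc1]
    simp only [Nat.cast_zero, add_zero, Nat.sub_zero]
    rw [QQ_per hu hv i]
    -- key identity
    have hkey := keyT hu hv i b hbM
    have hsub : Cc M u v i b / QQ M u v (i + (b : ℤ))
        - Cc M u v i (b + 1) / QQ M u v (i + ((b : ℤ) + 1))
        = q ^ (2 * b) * Bm M u v i b * QQ M u v i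
            / (QQ M u v (i + (b : ℤ)) * QQ M u v (i + ((b : ℤ) + 1))) := by
      rw [div_sub_div _ _ (hf _) (hf _)]
      congr 1
      linear_combination hkey
    rw [hsub]
    have hKinv : (q ^ (M - (b + 1)))⁻¹ * q ^ (M - 1) = q ^ b := by
      rw [mul_comm, ← pow_sub₀ q hq (show M - (b + 1) ≤ M - 1 by omega)]
      congr 1
      omega
    have hK2 : (q ^ (M - (b + 1)))⁻¹ = q ^ b * (q ^ (M - 1))⁻¹ := by
      rw [← hKinv, mul_assoc, mul_inv_cancel₀ (pow_ne_zero _ hq), mul_one]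
    rw [Bm, hK2]
    have h1 := hf (i + (b : ℤ))
    have h2 := hf (i + ((b : ℤ) + 1))
    have h3 := hf i
    have h4 : q ^ (M - 1) ≠ 0 := pow_ne_zero _ hq
    field_simp
    ring
  rw [QQ, Finset.sum_congr rfl hterm, ← Finset.mul_sum]
  have htel : ∑ b ∈ Finset.range M,
      (Cc M u v i b / QQ M u v (i + (b : ℤ))
        - Cc M u v i (b + 1) / QQ M u v (i + ((b : ℤ) + 1)))
      = Cc M u v i 0 / QQ M u v (i + ((0 : ℕ) : ℤ)) - Cc M u v i M / QQ M u v (i + ((M : ℕ) : ℤ)) := by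
    have := Finset.sum_range_sub' (fun b => Cc M u v i b / QQ M u v (i + (b : ℤ))) M
    rw [← this]
    refine Finset.sum_congr rfl fun b _ => ?_
    have hcast : ((b + 1 : ℕ) : ℤ) = (b : ℤ) + 1 := by push_cast; ring
    rw [hcast]
  rw [htel, Cc_zero, Cc_top]
  simp only [Nat.cast_zero, add_zero]
  rw [div_self (hf _)]
  simp

lemma Qpoly_eq_QQ (M : ℕ) (x : ℤ → ℤ → ℂ) (i j : ℤ) :
    Qpoly M x i j = QQ M (fun l => x l j) (fun l => x l (j + 1)) i := by
  unfold Qpoly QQ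
  have h : Finset.Icc 1 M = Finset.Ico 1 (M + 1) := by
    rw [Finset.Ico_add_one_right_eq_Icc]
  rw [h, Finset.sum_Ico_eq_sum_range]
  have hM : M + 1 - 1 = M := by omega
  rw [hM]
  refine Finset.sum_congr rfl fun b _ => ?_
  congr 1
  · unfold PP
    congr 1
    have e : 1 + b - 1 = b := by omega
    rw [e, ← Finset.Icc_add_one_left_eq_Ioc, zero_add]
  · unfold PP
    congr 1
    have e : 1 + b + 1 = (b + 1) + 1 := by omega
    rw [e, ← Finset.Icc_add_one_left_eq_Ioc]

lemma mod_fact (N : ℕ) (hN : 3 ≤ N) (a : ℤ) (h : a % (N : ℤ) = 0) :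
    (a + 1) % (N : ℤ) ≠ 0 := by
  obtain ⟨t, ht⟩ := Int.dvd_of_emod_eq_zero h
  rw [ht, show (N : ℤ) * t + 1 = 1 + (N : ℤ) * t from by ring, Int.add_mul_emod_self_left]
  have h1N : (1 : ℤ) < (N : ℤ) := by exact_mod_cast (by omega : 1 < N)
  rw [Int.emod_eq_of_lt (by norm_num) h1N]
  norm_num

lemma col1 (M N : ℕ) (q : ℂ) (x : ℤ → ℤ → ℂ) (j0 j' : ℤ)
    (hj' : (j' - j0) % (N : ℤ) = 0) (l : ℤ) :
    sWeyl M N q j0 x l j' = q * x l (j' + 1) * Qpoly M x (l - 1) j' / Qpoly M x l j' := by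
  unfold sWeyl
  rw [if_pos hj']

lemma col2 (M N : ℕ) (hN : 3 ≤ N) (q : ℂ) (x : ℤ → ℤ → ℂ) (j0 j' : ℤ)
    (hj' : (j' - j0) % (N : ℤ) = 0) (l : ℤ) :
    sWeyl M N q j0 x l (j' + 1)
      = q⁻¹ * x l j' * Qpoly M x l j' / Qpoly M x (l - 1) j' := by
  unfold sWeyl
  have hc1 : (j' + 1 - j0) % (N : ℤ) ≠ 0 := by
    rw [show j' + 1 - j0 = (j' - j0) + 1 from by ring]
    exact mod_fact N hN _ hj'
  have hc2 : (j' + 1 - j0 - 1) % (N : ℤ) = 0 := by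
    rw [show j' + 1 - j0 - 1 = j' - j0 from by ring]
    exact hj'
  rw [if_neg hc1, if_pos hc2, show j' + 1 - 1 = j' from by ring]

lemma colQ (M N : ℕ) (hN : 3 ≤ N) (q : ℂ) (hq : q ≠ 0) (x : ℤ → ℤ → ℂ)
    (hxq : ∀ i j : ℤ, x (i + (M : ℤ)) j = q * x i j) (j0 : ℤ)
    (hQ1 : ∀ i j : ℤ, Qpoly M x i j ≠ 0) (j' : ℤ)
    (hj' : (j' - j0) % (N : ℤ) = 0) (l : ℤ) :
    Qpoly M (sWeyl M N q j0 x) l j' = Qpoly M x l j' := by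
  have hu : ∀ i : ℤ, (fun l' => x l' j') (i + (M : ℤ)) = q * (fun l' => x l' j') i :=
    fun i => hxq i j'
  have hv : ∀ i : ℤ, (fun l' => x l' (j' + 1)) (i + (M : ℤ))
      = q * (fun l' => x l' (j' + 1)) i := fun i => hxq i (j' + 1)
  have hf : ∀ i : ℤ, QQ M (fun l' => x l' j') (fun l' => x l' (j' + 1)) i ≠ 0 := by
    intro i
    rw [← Qpoly_eq_QQ]
    exact hQ1 i j'
  have hcol1 : (fun l' => sWeyl M N q j0 x l' j')
      = (fun l' => q * (fun l'' => x l'' (j' + 1)) l'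
          * QQ M (fun l'' => x l'' j') (fun l'' => x l'' (j' + 1)) (l' - 1)
          / QQ M (fun l'' => x l'' j') (fun l'' => x l'' (j' + 1)) l') := by
    funext l'
    rw [col1 M N q x j0 j' hj' l', Qpoly_eq_QQ, Qpoly_eq_QQ]
  have hcol2 : (fun l' => sWeyl M N q j0 x l' (j' + 1))
      = (fun l' => q⁻¹ * (fun l'' => x l'' j') l'
          * QQ M (fun l'' => x l'' j') (fun l'' => x l'' (j' + 1)) l'
          / QQ M (fun l'' => x l'' j') (fun l'' => x l'' (j' + 1)) (l' - 1)) := by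
    funext l'
    rw [col2 M N hN q x j0 j' hj' l', Qpoly_eq_QQ, Qpoly_eq_QQ]
  calc Qpoly M (sWeyl M N q j0 x) l j'
      = QQ M (fun l' => sWeyl M N q j0 x l' j')
          (fun l' => sWeyl M N q j0 x l' (j' + 1)) l := Qpoly_eq_QQ M _ l j'
    _ = QQ M (fun l' => x l' j') (fun l' => x l' (j' + 1)) l := by
        rw [hcol1, hcol2]
        exact QQ_invol hq hu hv hf l
    _ = Qpoly M x l j' := (Qpoly_eq_QQ M x l j').symm

end S15

/-- The Bäcklund transformation s_{j0} is an involution: s_{j0} ∘ s_{j0} = id. -/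
theorem stmt15 (M N : ℕ) (hM : 2 ≤ M) (hN : 3 ≤ N) (p q : ℂ)
    (hq : q ≠ 0) (hp : p ≠ 0) (x : ℤ → ℤ → ℂ)
    (hxq : ∀ i j : ℤ, x (i + (M : ℤ)) j = q * x i j)
    (hxp : ∀ i j : ℤ, x i (j + (N : ℤ)) = p * x i j) (j0 : ℤ)
    (hQ1 : ∀ i j : ℤ, Qpoly M x i j ≠ 0)
    (hQ2 : ∀ i j : ℤ, Qpoly M (sWeyl M N q j0 x) i j ≠ 0) :
    ∀ i j : ℤ, sWeyl M N q j0 (sWeyl M N q j0 x) i j = x i j := by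
  intro i j
  by_cases h1 : (j - j0) % (N : ℤ) = 0
  · rw [show sWeyl M N q j0 (sWeyl M N q j0 x) i j
        = q * (sWeyl M N q j0 x) i (j + 1)
            * Qpoly M (sWeyl M N q j0 x) (i - 1) j / Qpoly M (sWeyl M N q j0 x) i j from by
      unfold sWeyl
      rw [if_pos h1]]
    rw [S15.col2 M N hN q x j0 j h1 i, S15.colQ M N hN q hq x hxq j0 hQ1 j h1 (i - 1),
      S15.colQ M N hN q hq x hxq j0 hQ1 j h1 i]
    have hFi := hQ1 i j
    have hFi1 := hQ1 (i - 1) j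
    field_simp
  · by_cases h2 : (j - j0 - 1) % (N : ℤ) = 0
    · have hj' : (j - 1 - j0) % (N : ℤ) = 0 := by
        rw [show j - 1 - j0 = j - j0 - 1 from by ring]
        exact h2
      rw [show sWeyl M N q j0 (sWeyl M N q j0 x) i j
          = q⁻¹ * (sWeyl M N q j0 x) i (j - 1)
              * Qpoly M (sWeyl M N q j0 x) i (j - 1)
              / Qpoly M (sWeyl M N q j0 x) (i - 1) (j - 1) from by
        unfold sWeyl
        rw [if_neg h1, if_pos h2]]
      rw [S15.col1 M N q x j0 (j - 1) hj' i, S15.colQ M N hN q hq x hxq j0 hQ1 (j - 1) hj' i,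
        S15.colQ M N hN q hq x hxq j0 hQ1 (j - 1) hj' (i - 1),
        show j - 1 + 1 = j from by ring]
      have hFi := hQ1 i (j - 1)
      have hFi1 := hQ1 (i - 1) (j - 1)
      field_simp
    · rw [show sWeyl M N q j0 (sWeyl M N q j0 x) i j = (sWeyl M N q j0 x) i j from by
        unfold sWeyl
        rw [if_neg h1, if_neg h2]]
      unfold sWeyl
      rw [if_neg h1, if_neg h2]
end
end
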